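/- arXiv:2105.12156 — 6 statements merged into one kernel-verified Lean document; each statement's English description precedes it below -/
import Mathlib

section
/- For every integer n ≥ 0, the tail of ζ(2), namely ∑_{n₁ > n} 1/n₁², equals 3 · ∑_{m > n} m^{-2} · (binomial(2m, m))^{-1}. -/
open Filter Nat

noncomputable def Aa (n k : ℕ) : ℝ :=
  if n < k then (((k + n).choose n : ℝ))⁻¹ * (k : ℝ) ^ (-2 : ℤ) else 0

noncomputable def Bb (n m : ℕ) : ℝ :=
  if n < m then (m : ℝ) ^ (-2 : ℤ) * (((2 * m).choose m : ℝ))⁻¹ else 0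

noncomputable def dd (m : ℕ) : ℝ := (m : ℝ) ^ (-2 : ℤ) * (((2 * m).choose m : ℝ))⁻¹

noncomputable def Ee (n j : ℕ) : ℝ := (j ! : ℝ) / ((n + j + 1)! : ℝ)

lemma zpow_neg2 (x : ℝ) : x ^ (-2 : ℤ) = (x ^ 2)⁻¹ := by
  rw [show (-2 : ℤ) = -(2 : ℤ) from rfl, zpow_neg, zpow_two, sq]

lemma fact_cast_pos (m : ℕ) : (0 : ℝ) < (m ! : ℝ) := by
  exact_mod_cast Nat.factorial_pos m

lemma choose_cast (n k : ℕ) : ((k + n).choose n : ℝ) = ((k + n)! : ℝ) / ((n ! : ℝ) * (k ! : ℝ)) := by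
  rw [Nat.cast_choose ℝ (Nat.le_add_left n k), Nat.add_sub_cancel]

-- the universal summable bound
noncomputable def uu (k : ℕ) : ℝ := ((k : ℝ) ^ 2)⁻¹

lemma summable_uu : Summable uu := by
  have h := (Real.summable_one_div_nat_pow (p := 2)).2 (by norm_num)
  exact h.congr (fun k => by rw [one_div]; rfl)

lemma uu_nonneg (k : ℕ) : 0 ≤ uu k := inv_nonneg.2 (sq_nonneg _)

lemma Aa_nonneg (n k : ℕ) : 0 ≤ Aa n k := by
  unfold Aa; split
  · have h1 : (0:ℝ) ≤ (((k + n).choose n : ℝ))⁻¹ := by positivity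
    have h2 : (0:ℝ) ≤ (k : ℝ) ^ (-2 : ℤ) := by rw [zpow_neg2]; positivity
    exact mul_nonneg h1 h2
  · exact le_rfl

lemma Bb_nonneg (n k : ℕ) : 0 ≤ Bb n k := by
  unfold Bb; split
  · have h1 : (0:ℝ) ≤ (((2 * k).choose k : ℝ))⁻¹ := by positivity
    have h2 : (0:ℝ) ≤ (k : ℝ) ^ (-2 : ℤ) := by rw [zpow_neg2]; positivity
    exact mul_nonneg h2 h1
  · exact le_rfl

-- pointwise bound against the indicator tail function
noncomputable def vv (n k : ℕ) : ℝ := if n < k then uu k else 0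

lemma vv_nonneg (n k : ℕ) : 0 ≤ vv n k := by
  unfold vv; split
  · exact uu_nonneg k
  · exact le_rfl

lemma vv_le_uu (n k : ℕ) : vv n k ≤ uu k := by
  unfold vv; split
  · exact le_rfl
  · exact uu_nonneg k

lemma summable_vv (n : ℕ) : Summable (vv n) :=
  Summable.of_nonneg_of_le (vv_nonneg n) (vv_le_uu n) summable_uu

lemma Aa_le_vv (n k : ℕ) : Aa n k ≤ vv n k := by
  unfold Aa vv
  split
  · rename_i h
    rw [zpow_neg2]
    have hc : (1 : ℝ) ≤ (((k + n).choose n : ℝ)) := by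
      exact_mod_cast Nat.one_le_iff_ne_zero.2 (Nat.choose_pos (Nat.le_add_left n k)).ne'
    have := inv_le_one_of_one_le₀ hc
    calc (((k + n).choose n : ℝ))⁻¹ * ((k:ℝ)^2)⁻¹ ≤ 1 * ((k:ℝ)^2)⁻¹ := by
          apply mul_le_mul_of_nonneg_right this (by positivity)
      _ = uu k := by rw [one_mul]; rfl
  · exact le_rfl

lemma Bb_le_vv (n k : ℕ) : Bb n k ≤ vv n k := by
  unfold Bb vv
  split
  · rename_i h
    rw [zpow_neg2]
    have hc : (1 : ℝ) ≤ (((2 * k).choose k : ℝ)) := by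
      exact_mod_cast Nat.one_le_iff_ne_zero.2 (Nat.choose_pos (by omega)).ne'
    have := inv_le_one_of_one_le₀ hc
    calc ((k:ℝ)^2)⁻¹ * (((2 * k).choose k : ℝ))⁻¹ ≤ ((k:ℝ)^2)⁻¹ * 1 := by
          apply mul_le_mul_of_nonneg_left this (by positivity)
      _ = uu k := by rw [mul_one]; rfl
  · exact le_rfl

lemma summable_Aa (n : ℕ) : Summable (Aa n) :=
  Summable.of_nonneg_of_le (Aa_nonneg n) (Aa_le_vv n) (summable_vv n)

lemma summable_Bb (n : ℕ) : Summable (Bb n) :=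
  Summable.of_nonneg_of_le (Bb_nonneg n) (Bb_le_vv n) (summable_vv n)

-- key algebraic identities
lemma delta_base (n : ℕ) : Aa n (n + 1) - Aa (n + 1) (n + 1) = 2 * dd (n + 1) := by
  unfold Aa dd
  rw [if_pos (by omega), if_neg (by omega)]
  simp only [zpow_neg2]
  rw [choose_cast n (n+1)]
  have h2 : (2 * (n + 1)).choose (n + 1) = ((n+1) + (n+1)).choose (n+1) := by ring_nf
  rw [h2, choose_cast (n+1) (n+1)]
  have e1 : n + 1 + n = (2*n) + 1 := by omega
  have e2 : n + 1 + (n + 1) = (2*n + 1) + 1 := by omega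
  rw [e1, e2, Nat.factorial_succ (2*n+1), Nat.factorial_succ n]
  have p1 := fact_cast_pos n
  have p2 := fact_cast_pos (2*n+1)
  have p3 : (0:ℝ) < (n:ℝ) + 1 := by positivity
  push_cast
  field_simp
  ring

lemma delta_succ (n j : ℕ) (hj : n + 1 ≤ j) :
    Aa n (j + 1) - Aa (n + 1) (j + 1)
      = ((n ! : ℝ) / ((n:ℝ) + 1)) * (Ee n j - Ee n (j + 1)) := by
  unfold Aa Ee
  rw [if_pos (by omega), if_pos (by omega), zpow_neg2]
  rw [choose_cast n (j+1), choose_cast (n+1) (j+1)]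
  have e1 : j + 1 + n = (n + j) + 1 := by omega
  have e2 : j + 1 + (n + 1) = ((n + j) + 1) + 1 := by omega
  have e3 : n + (j + 1) + 1 = ((n + j) + 1) + 1 := by omega
  rw [e1, e2, e3, Nat.factorial_succ ((n+j)+1), Nat.factorial_succ (n+j),
    Nat.factorial_succ n, Nat.factorial_succ j]
  have p1 := fact_cast_pos n
  have p2 := fact_cast_pos j
  have p3 := fact_cast_pos (n+j)
  have p4 : (0:ℝ) < (n:ℝ) + 1 := by positivity
  have p5 : (0:ℝ) < (j:ℝ) + 1 := by positivity
  have p6 : (0:ℝ) < (n:ℝ) + (j:ℝ) + 1 := by positivity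
  have p7 : (0:ℝ) < (n:ℝ) + (j:ℝ) + 1 + 1 := by positivity
  push_cast
  field_simp
  ring

lemma cE (n : ℕ) : ((n ! : ℝ) / ((n:ℝ) + 1)) * Ee n (n + 1) = dd (n + 1) := by
  unfold Ee dd
  rw [zpow_neg2]
  have h2 : (2 * (n + 1)).choose (n + 1) = ((n+1) + (n+1)).choose (n+1) := by ring_nf
  rw [h2, choose_cast (n+1) (n+1)]
  have e2 : n + 1 + (n + 1) = (2*n + 1) + 1 := by omega
  have e3 : n + (n + 1) + 1 = (2*n + 1) + 1 := by omega
  rw [e2, e3, Nat.factorial_succ (2*n+1), Nat.factorial_succ n]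
  have p1 := fact_cast_pos n
  have p2 := fact_cast_pos (2*n+1)
  have p4 : (0:ℝ) < (n:ℝ) + 1 := by positivity
  push_cast
  field_simp

lemma Aa_zero_of_le (n k : ℕ) (h : k ≤ n) : Aa n k = 0 := by
  unfold Aa; rw [if_neg (by omega)]

-- partial sums
lemma psum (n N : ℕ) :
    ∑ k ∈ Finset.range (n + 2 + N), (Aa n k - Aa (n+1) k)
      = 2 * dd (n + 1) + ((n ! : ℝ) / ((n:ℝ) + 1)) * (Ee n (n + 1) - Ee n (n + 1 + N)) := by
  induction N with
  | zero =>
    have : ∑ k ∈ Finset.range (n + 2 + 0), (Aa n k - Aa (n+1) k)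
        = Aa n (n+1) - Aa (n+1) (n+1) := by
      apply Finset.sum_eq_single_of_mem (n+1) (by simp)
      intro b hb hne
      simp only [Finset.mem_range] at hb
      have hb' : b ≤ n := by omega
      rw [Aa_zero_of_le n b hb', Aa_zero_of_le (n+1) b (by omega), sub_zero]
    rw [this, delta_base]
    ring
  | succ N ih =>
    have hrange : n + 2 + (N + 1) = (n + 2 + N) + 1 := by omega
    rw [hrange, Finset.sum_range_succ, ih]
    have hidx : n + 2 + N = (n + 1 + N) + 1 := by omega
    rw [hidx, delta_succ n (n + 1 + N) (by omega)]
    have hidx2 : n + 1 + (N + 1) = (n + 1 + N) + 1 := by omega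
    rw [hidx2]
    ring

lemma Ee_nonneg (n j : ℕ) : 0 ≤ Ee n j := by
  unfold Ee
  have := fact_cast_pos j
  have := fact_cast_pos (n + j + 1)
  positivity

lemma Ee_le (n j : ℕ) : Ee n j ≤ 1 / ((j : ℝ) + 1) := by
  unfold Ee
  have h1 : ((j+1)! : ℝ) ≤ ((n + j + 1)! : ℝ) := by
    exact_mod_cast Nat.factorial_le (by omega)
  have h2 := fact_cast_pos (n + j + 1)
  have h3 := fact_cast_pos j
  have h5 : (0:ℝ) < (j:ℝ) + 1 := by positivity
  rw [div_le_div_iff₀ h2 h5]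
  calc (j ! : ℝ) * ((j:ℝ) + 1) = ((j+1)! : ℝ) := by
        rw [Nat.factorial_succ]; push_cast; ring
    _ ≤ ((n + j + 1)! : ℝ) := h1
    _ = 1 * ((n + j + 1)! : ℝ) := by ring

lemma tendsto_Ee (n : ℕ) : Tendsto (fun N => Ee n (n + 1 + N)) atTop (nhds 0) := by
  refine squeeze_zero (fun N => Ee_nonneg n (n + 1 + N)) (fun N => ?_)
    tendsto_one_div_add_atTop_nhds_zero_nat
  · have h1 := Ee_le n (n + 1 + N)
    push_cast at h1
    have h2 : 1 / ((n:ℝ) + 1 + (N:ℝ) + 1) ≤ 1 / ((N : ℝ) + 1) := by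
      apply one_div_le_one_div_of_le (by positivity)
      linarith
    linarith

lemma tsum_delta (n : ℕ) :
    ∑' k, (Aa n k - Aa (n+1) k) = 3 * dd (n + 1) := by
  have hsum : Summable (fun k => Aa n k - Aa (n+1) k) :=
    (summable_Aa n).sub (summable_Aa (n+1))
  have h1 : Tendsto (fun N => ∑ k ∈ Finset.range N, (Aa n k - Aa (n+1) k)) atTop
      (nhds (∑' k, (Aa n k - Aa (n+1) k))) := hsum.hasSum.tendsto_sum_nat
  have h2 : Tendsto (fun N => ∑ k ∈ Finset.range (n + 2 + N), (Aa n k - Aa (n+1) k)) atTop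
      (nhds (∑' k, (Aa n k - Aa (n+1) k))) := by
    have := (tendsto_add_atTop_iff_nat (f := fun N => ∑ k ∈ Finset.range N, (Aa n k - Aa (n+1) k))
      (l := nhds (∑' k, (Aa n k - Aa (n+1) k))) (n + 2)).2 h1
    refine this.congr (fun N => ?_)
    rw [Nat.add_comm]
  have h3 : Tendsto (fun N => ∑ k ∈ Finset.range (n + 2 + N), (Aa n k - Aa (n+1) k)) atTop
      (nhds (2 * dd (n + 1) + ((n ! : ℝ) / ((n:ℝ) + 1)) * (Ee n (n + 1) - 0))) := by
    simp only [psum]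
    exact (tendsto_const_nhds.add
      ((tendsto_const_nhds.sub (tendsto_Ee n)).const_mul _))
  have := tendsto_nhds_unique h2 h3
  rw [this, sub_zero, cE]
  ring

lemma fstep (n : ℕ) : ∑' k, Aa n k = 3 * dd (n + 1) + ∑' k, Aa (n+1) k := by
  have h := Summable.tsum_sub (summable_Aa n) (summable_Aa (n+1))
  rw [tsum_delta] at h
  linarith

lemma gstep (n : ℕ) : ∑' m, Bb n m = dd (n + 1) + ∑' m, Bb (n+1) m := by
  have hfun : ∀ m, Bb n m = (if m = n + 1 then dd (n+1) else 0) + Bb (n+1) m := by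
    intro m
    unfold Bb dd
    by_cases h1 : m = n + 1
    · subst h1
      rw [if_pos rfl, if_pos (by omega), if_neg (by omega), add_zero]
    · rw [if_neg h1, zero_add]
      by_cases h2 : n < m
      · rw [if_pos h2, if_pos (by omega)]
      · rw [if_neg h2, if_neg (by omega)]
  calc ∑' m, Bb n m = ∑' m, ((if m = n + 1 then dd (n+1) else 0) + Bb (n+1) m) :=
        tsum_congr hfun
    _ = (∑' m, if m = n + 1 then dd (n+1) else 0) + ∑' m, Bb (n+1) m := by
        apply Summable.tsum_add _ (summable_Bb (n+1))
        exact summable_of_finite_support (Set.Finite.subset (Set.finite_singleton (n+1))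
          (by
            intro x hx
            rw [Function.mem_support] at hx
            rw [Set.mem_singleton_iff]
            by_contra h
            exact hx (if_neg h)))
    _ = dd (n + 1) + ∑' m, Bb (n+1) m := by rw [tsum_ite_eq]

noncomputable def Ff (n : ℕ) : ℝ := (∑' k, Aa n k) - 3 * ∑' m, Bb n m

lemma Ff_const (n : ℕ) : Ff n = Ff 0 := by
  induction n with
  | zero => rfl
  | succ n ih =>
    rw [← ih]
    unfold Ff
    rw [fstep n, gstep n]
    ring

lemma tsum_vv_eq (n : ℕ) : ∑' k, vv n k = ∑' i, uu (i + (n + 1)) := by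
  have h := Summable.sum_add_tsum_nat_add (n + 1) (summable_vv n)
  have h0 : ∑ i ∈ Finset.range (n + 1), vv n i = 0 := by
    apply Finset.sum_eq_zero
    intro i hi
    simp only [Finset.mem_range] at hi
    unfold vv
    rw [if_neg (by omega)]
  rw [h0, zero_add] at h
  rw [← h]
  apply tsum_congr
  intro i
  unfold vv
  rw [if_pos (by omega)]

lemma tendsto_tail : Tendsto (fun n => ∑' k, vv n k) atTop (nhds 0) := by
  have h1 : Tendsto (fun i => ∑' k, uu (k + i)) atTop (nhds 0) := tendsto_sum_nat_add uu
  have h2 := (tendsto_add_atTop_iff_nat (f := fun i => ∑' k, uu (k + i)) (l := nhds 0) 1).2 h1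
  refine h2.congr (fun n => ?_)
  rw [tsum_vv_eq]

lemma tendsto_fA : Tendsto (fun n => ∑' k, Aa n k) atTop (nhds 0) := by
  apply squeeze_zero (fun n => tsum_nonneg (Aa_nonneg n)) _ tendsto_tail
  intro n
  exact Summable.tsum_le_tsum (Aa_le_vv n) (summable_Aa n) (summable_vv n)

lemma tendsto_gB : Tendsto (fun n => ∑' m, Bb n m) atTop (nhds 0) := by
  apply squeeze_zero (fun n => tsum_nonneg (Bb_nonneg n)) _ tendsto_tail
  intro n
  exact Summable.tsum_le_tsum (Bb_le_vv n) (summable_Bb n) (summable_vv n)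

lemma Ff_zero (n : ℕ) : Ff n = 0 := by
  have h1 : Tendsto Ff atTop (nhds (Ff 0)) := by
    have : Ff = fun _ => Ff 0 := funext Ff_const
    rw [this]; exact tendsto_const_nhds
  have h2 : Tendsto Ff atTop (nhds 0) := by
    have := tendsto_fA.sub (tendsto_gB.const_mul 3)
    simpa using (show Tendsto Ff atTop (nhds (0 - 3 * 0)) from this)
  rw [Ff_const n, tendsto_nhds_unique h1 h2]

theorem stmt_2 (n : ℕ) :
    (∑' k : ℕ, if n < k then (((k + n).choose n : ℝ))⁻¹ * (k : ℝ) ^ (-2 : ℤ) else 0)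
      = 3 * ∑' m : ℕ, if n < m then (m : ℝ) ^ (-2 : ℤ) * (((2 * m).choose m : ℝ))⁻¹ else 0 := by
  have h := Ff_zero n
  unfold Ff Aa Bb at h
  linarith
end

section
/- Euler's formula: ζ(2) = 3 · ∑_{m=1}^∞ 1/(m² · binomial(2m, m)). -/
open MeasureTheory intervalIntegral Set Real

lemma beta_nat : ∀ (b a : ℕ), ∫ x in (0:ℝ)..1, x ^ a * (1 - x) ^ b
    = (a.factorial * b.factorial : ℝ) / (a + b + 1).factorial := by
  intro b
  induction b with
  | zero =>
    intro a
    simp [integral_pow, Nat.factorial_succ]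
    field_simp
  | succ b IH =>
    intro a
    have hd : ∀ x : ℝ, HasDerivAt (fun x : ℝ => x ^ (a+1) * (1-x) ^ (b+1))
        (((a:ℝ)+1) * (x ^ a * (1-x) ^ (b+1)) - ((b:ℝ)+1) * (x ^ (a+1) * (1-x) ^ b)) x := by
      intro x
      have h1 : HasDerivAt (fun x : ℝ => x ^ (a+1)) (((a:ℝ)+1) * x ^ a) x := by
        simpa using hasDerivAt_pow (a+1) x
      have h2 : HasDerivAt (fun x : ℝ => (1-x) ^ (b+1)) (-(((b:ℝ)+1) * (1-x) ^ b)) x := by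
        have h3 : HasDerivAt (fun x : ℝ => 1 - x) (-1) x := by
          exact (hasDerivAt_id' x).const_sub 1
        have := (hasDerivAt_pow (b+1) (1-x)).comp x h3
        simpa [Function.comp_def] using this
      have : HasDerivAt (fun x : ℝ => x ^ (a+1) * (1-x) ^ (b+1)) _ x := h1.mul h2
      convert this using 1
      push_cast
      ring
    have hint : ∀ (p q : ℕ), IntervalIntegrable (fun x : ℝ => x ^ p * (1-x) ^ q)
        volume 0 1 := by
      intro p q
      exact (Continuous.mul (continuous_pow p) ((continuous_const.sub continuous_id).pow q)).intervalIntegrable 0 1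
    have key := integral_eq_sub_of_hasDerivAt (fun x _ => hd x)
      (((hint a (b+1)).const_mul _).sub ((hint (a+1) b).const_mul _))
    rw [integral_sub ((hint a (b+1)).const_mul _) ((hint (a+1) b).const_mul _),
      intervalIntegral.integral_const_mul, intervalIntegral.integral_const_mul] at key
    norm_num at key
    have hIH := IH (a+1)
    rw [hIH] at key
    have ha1 : ((a:ℝ)+1) ≠ 0 := by positivity
    have heq : (a + (b+1) + 1) = (a + 1 + b + 1) := by ring
    rw [heq]
    have h5 : ((a+1).factorial : ℝ) = ((a:ℝ)+1) * a.factorial := by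
      rw [Nat.factorial_succ]; push_cast; ring
    have h6 : ((b+1).factorial : ℝ) = ((b:ℝ)+1) * b.factorial := by
      rw [Nat.factorial_succ]; push_cast; ring
    rw [eq_div_iff (by positivity : ((a + 1 + b + 1).factorial : ℝ) ≠ 0)]
    apply mul_left_cancel₀ ha1
    rw [h6]
    rw [h5] at key
    field_simp at key
    linear_combination key

lemma summable_inv_sq : Summable (fun n : ℕ => 1/((n:ℝ)+1)^2) := by
  have := (summable_nat_add_iff 1).mpr (Real.summable_one_div_nat_pow.mpr one_lt_two)
  refine this.congr fun n => ?_
  push_cast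
  ring

lemma summable_eta : Summable (fun n : ℕ => (-1:ℝ)^n/((n:ℝ)+1)^2) := by
  refine Summable.of_abs (summable_inv_sq.congr fun n => ?_)
  rw [abs_div, abs_pow, abs_neg, abs_one, one_pow, abs_of_nonneg (by positivity)]

set_option maxHeartbeats 1000000 in
lemma eta_eq : (∑' m : ℕ, (-1:ℝ)^m/((m:ℝ)+1)^2) = (1/2) * ∑' n : ℕ, (1:ℝ)/((n:ℝ)+1)^2 := by
  have hse : Summable (fun k : ℕ => (1:ℝ)/((2*k:ℝ)+1)^2) := by
    refine Summable.of_nonneg_of_le (fun k => by positivity) (fun k => ?_) summable_inv_sq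
    exact one_div_le_one_div_of_le (by positivity)
      (by nlinarith [Nat.cast_nonneg (α := ℝ) k])
  have hso : Summable (fun k : ℕ => (1:ℝ)/((2*k:ℝ)+2)^2) := by
    refine Summable.of_nonneg_of_le (fun k => by positivity) (fun k => ?_) summable_inv_sq
    exact one_div_le_one_div_of_le (by positivity)
      (by nlinarith [Nat.cast_nonneg (α := ℝ) k])
  set E := ∑' k : ℕ, (1:ℝ)/((2*k:ℝ)+1)^2 with hE
  set O := ∑' k : ℕ, (1:ℝ)/((2*k:ℝ)+2)^2 with hO
  have he : HasSum (fun k : ℕ => (-1:ℝ)^(2*k)/(((2*k : ℕ):ℝ)+1)^2) E := by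
    convert hse.hasSum using 1
    funext k
    push_cast [pow_mul]
    norm_num
  have ho : HasSum (fun k : ℕ => (-1:ℝ)^(2*k+1)/(((2*k+1 : ℕ):ℝ)+1)^2) (-O) := by
    convert (show HasSum (fun k : ℕ => -((1:ℝ)/((2*k:ℝ)+2)^2)) (-O) from hso.hasSum.neg) using 1
    funext k
    push_cast [pow_mul, pow_succ]
    ring_nf
  have heta : HasSum (fun m : ℕ => (-1:ℝ)^m/((m:ℝ)+1)^2) (E + -O) := he.even_add_odd ho
  have hz : HasSum (fun k : ℕ => (1:ℝ)/(((2*k : ℕ):ℝ)+1)^2) E := by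
    convert hse.hasSum using 1
    funext k
    push_cast
    ring_nf
  have hz2 : HasSum (fun k : ℕ => (1:ℝ)/(((2*k+1 : ℕ):ℝ)+1)^2) O := by
    convert hso.hasSum using 1
    funext k
    push_cast
    ring_nf
  have hzeta : HasSum (fun n : ℕ => (1:ℝ)/((n:ℝ)+1)^2) (E + O) := hz.even_add_odd hz2
  have hOq : O = (1/4) * ∑' n : ℕ, (1:ℝ)/((n:ℝ)+1)^2 := by
    rw [← tsum_mul_left, hO]
    refine tsum_congr fun k => ?_
    rw [show ((2*(k:ℝ))+2)^2 = 4*((k:ℝ)+1)^2 by ring]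
    rw [one_div, one_div, one_div, mul_inv, ← mul_inv]
  have h1 : ∑' n : ℕ, (1:ℝ)/((n:ℝ)+1)^2 = E + O := hzeta.tsum_eq
  rw [heta.tsum_eq, h1]
  rw [h1] at hOq
  linarith

lemma mono_int (p : ℕ) : ∫ x in Ioo (0:ℝ) 1, x ^ p = 1/((p:ℝ)+1) := by
  rw [← integral_Ioc_eq_integral_Ioo, ← intervalIntegral.integral_of_le zero_le_one,
    integral_pow]
  simp

lemma poly_integrable (f : ℝ → ℝ) (hf : Continuous f) :
    Integrable f (volume.restrict (Ioo (0:ℝ) 1)) :=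
  ((hf.integrableOn_Icc (a := 0) (b := 1)).mono_set Ioo_subset_Icc_self)

lemma hasSum_J {x : ℝ} (hx : x ∈ Ioo (0:ℝ) 1) :
    HasSum (fun m : ℕ => (-1:ℝ)^m * x^m/((m:ℝ)+1)) (Real.log (1+x)/x) := by
  obtain ⟨h0, h1⟩ := hx
  have habs : |(-x)| < 1 := by rw [abs_neg, abs_of_pos h0]; exact h1
  have h := hasSum_pow_div_log_of_abs_lt_one habs
  rw [sub_neg_eq_add] at h
  have h2 : HasSum (fun n : ℕ => (-1/x) * ((-x)^(n+1)/((n:ℝ)+1))) _ := h.mul_left (-1/x)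
  have he : (fun n : ℕ => (-1/x) * ((-x)^(n+1)/((n:ℝ)+1)))
      = fun m : ℕ => (-1:ℝ)^m * x^m/((m:ℝ)+1) := by
    funext n
    have hx0 : x ≠ 0 := ne_of_gt h0
    rw [neg_pow]
    field_simp
    ring
  rw [he] at h2
  convert h2 using 1
  ring

lemma hasSum_K {x : ℝ} (hx : x ∈ Ioo (0:ℝ) 1) :
    HasSum (fun m : ℕ => (-1:ℝ)^m * x^(3*m+2)/((m:ℝ)+1)) (Real.log (1+x^3)/x) := by
  obtain ⟨h0, h1⟩ := hx
  have habs : |(-x^3)| < 1 := by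
    rw [abs_neg, abs_of_pos (by positivity)]
    have hfac : 0 ≤ x*(1-x)*(1+x) := mul_nonneg (mul_nonneg h0.le (by linarith)) (by linarith)
    calc x^3 ≤ x := by nlinarith [hfac]
    _ < 1 := h1
  have h := hasSum_pow_div_log_of_abs_lt_one habs
  rw [sub_neg_eq_add] at h
  have h2 : HasSum (fun n : ℕ => (-1/x) * ((-x^3)^(n+1)/((n:ℝ)+1))) _ := h.mul_left (-1/x)
  have he : (fun n : ℕ => (-1/x) * ((-x^3)^(n+1)/((n:ℝ)+1)))
      = fun m : ℕ => (-1:ℝ)^m * x^(3*m+2)/((m:ℝ)+1) := by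
    funext n
    have hx0 : x ≠ 0 := ne_of_gt h0
    rw [neg_pow, ← pow_mul]
    have h3 : 3*(n+1) = 3*n+2+1 := by ring
    rw [h3]
    field_simp
    ring
  rw [he] at h2
  convert h2 using 1
  ring

lemma hasSum_S {x : ℝ} (hx : x ∈ Ioo (0:ℝ) 1) :
    HasSum (fun m : ℕ => x^m * (1-x)^(m+1)/((m:ℝ)+1)) (-Real.log (1-x+x^2)/x) := by
  obtain ⟨h0, h1⟩ := hx
  have hy0 : 0 < x*(1-x) := by nlinarith
  have habs : |x*(1-x)| < 1 := by
    rw [abs_of_pos hy0]; nlinarith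
  have h := hasSum_pow_div_log_of_abs_lt_one habs
  have hsub : 1 - x*(1-x) = 1 - x + x^2 := by ring
  rw [hsub] at h
  have h2 : HasSum (fun n : ℕ => (1/x) * ((x*(1-x))^(n+1)/((n:ℝ)+1))) _ := h.mul_left (1/x)
  have he : (fun n : ℕ => (1/x) * ((x*(1-x))^(n+1)/((n:ℝ)+1)))
      = fun m : ℕ => x^m * (1-x)^(m+1)/((m:ℝ)+1) := by
    funext n
    have hx0 : x ≠ 0 := ne_of_gt h0
    rw [mul_pow]
    field_simp
    ring
  rw [he] at h2
  convert h2 using 1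
  ring

-- J integral
lemma J_int : ∫ x in Ioo (0:ℝ) 1, Real.log (1+x)/x = ∑' m : ℕ, (-1:ℝ)^m/((m:ℝ)+1)^2 := by
  have hcont : ∀ m : ℕ, Continuous (fun x : ℝ => (-1:ℝ)^m * x^m/((m:ℝ)+1)) := by
    intro m; fun_prop
  have hFint : ∀ m : ℕ, Integrable (fun x : ℝ => (-1:ℝ)^m * x^m/((m:ℝ)+1))
      (volume.restrict (Ioo (0:ℝ) 1)) := fun m => poly_integrable _ (hcont m)
  have hnorm : ∀ m : ℕ, (∫ x in Ioo (0:ℝ) 1, ‖(-1:ℝ)^m * x^m/((m:ℝ)+1)‖) = 1/((m:ℝ)+1)^2 := by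
    intro m
    have : ∀ x ∈ Ioo (0:ℝ) 1, ‖(-1:ℝ)^m * x^m/((m:ℝ)+1)‖ = x^m/((m:ℝ)+1) := by
      intro x hx
      rw [Real.norm_eq_abs, abs_div, abs_mul, abs_pow, abs_pow, abs_neg, abs_one, one_pow,
        one_mul, abs_of_pos hx.1, abs_of_pos (by positivity : (0:ℝ) < (m:ℝ)+1)]
    rw [setIntegral_congr_fun measurableSet_Ioo this, MeasureTheory.integral_div, mono_int]
    have hm : ((m:ℝ)+1) ≠ 0 := by positivity
    field_simp
  have hsum : Summable (fun m : ℕ => ∫ x in Ioo (0:ℝ) 1, ‖(-1:ℝ)^m * x^m/((m:ℝ)+1)‖) := by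
    refine summable_inv_sq.congr fun m => ?_
    rw [hnorm m]
  have key := integral_tsum_of_summable_integral_norm hFint hsum
  have hptw : ∀ x ∈ Ioo (0:ℝ) 1, (∑' m : ℕ, (-1:ℝ)^m * x^m/((m:ℝ)+1)) = Real.log (1+x)/x :=
    fun x hx => (hasSum_J hx).tsum_eq
  rw [← setIntegral_congr_fun measurableSet_Ioo hptw, ← key]
  refine tsum_congr fun m => ?_
  rw [MeasureTheory.integral_div, MeasureTheory.integral_const_mul, mono_int]
  have hm : ((m:ℝ)+1) ≠ 0 := by positivity
  field_simp

-- K integral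
lemma K_int : ∫ x in Ioo (0:ℝ) 1, Real.log (1+x^3)/x
    = (1/3) * ∑' m : ℕ, (-1:ℝ)^m/((m:ℝ)+1)^2 := by
  have hcont : ∀ m : ℕ, Continuous (fun x : ℝ => (-1:ℝ)^m * x^(3*m+2)/((m:ℝ)+1)) := by
    intro m; fun_prop
  have hFint : ∀ m : ℕ, Integrable (fun x : ℝ => (-1:ℝ)^m * x^(3*m+2)/((m:ℝ)+1))
      (volume.restrict (Ioo (0:ℝ) 1)) := fun m => poly_integrable _ (hcont m)
  have hval : ∀ m : ℕ, (∫ x in Ioo (0:ℝ) 1, x^(3*m+2)/((m:ℝ)+1)) = 1/(3*((m:ℝ)+1)^2) := by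
    intro m
    rw [MeasureTheory.integral_div, mono_int]
    have hm : ((m:ℝ)+1) ≠ 0 := by positivity
    push_cast
    field_simp
    ring
  have hnorm : ∀ m : ℕ, (∫ x in Ioo (0:ℝ) 1, ‖(-1:ℝ)^m * x^(3*m+2)/((m:ℝ)+1)‖)
      = 1/(3*((m:ℝ)+1)^2) := by
    intro m
    have : ∀ x ∈ Ioo (0:ℝ) 1, ‖(-1:ℝ)^m * x^(3*m+2)/((m:ℝ)+1)‖ = x^(3*m+2)/((m:ℝ)+1) := by
      intro x hx
      rw [Real.norm_eq_abs, abs_div, abs_mul, abs_pow, abs_pow, abs_neg, abs_one, one_pow,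
        one_mul, abs_of_pos hx.1, abs_of_pos (by positivity : (0:ℝ) < (m:ℝ)+1)]
    rw [setIntegral_congr_fun measurableSet_Ioo this, hval m]
  have hsum : Summable (fun m : ℕ => ∫ x in Ioo (0:ℝ) 1, ‖(-1:ℝ)^m * x^(3*m+2)/((m:ℝ)+1)‖) := by
    refine ((summable_inv_sq.mul_left (1/3)).congr fun m => ?_)
    rw [hnorm m, one_div_mul_one_div]
  have key := integral_tsum_of_summable_integral_norm hFint hsum
  have hptw : ∀ x ∈ Ioo (0:ℝ) 1, (∑' m : ℕ, (-1:ℝ)^m * x^(3*m+2)/((m:ℝ)+1))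
      = Real.log (1+x^3)/x := fun x hx => (hasSum_K hx).tsum_eq
  rw [← setIntegral_congr_fun measurableSet_Ioo hptw, ← key, ← tsum_mul_left]
  refine tsum_congr fun m => ?_
  rw [MeasureTheory.integral_div, MeasureTheory.integral_const_mul, mono_int]
  have hm : ((m:ℝ)+1) ≠ 0 := by positivity
  field_simp
  push_cast
  ring

-- the central binomial term
lemma term_eq (m : ℕ) : ((m.factorial : ℝ) * (m+1).factorial / (m + (m+1) + 1).factorial)
    / ((m:ℝ)+1) = 1/(((m:ℝ)+1)^2 * ((2*(m+1)).choose (m+1) : ℝ)) := by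
  have h : (m+1) ≤ 2*(m+1) := by omega
  have hc := Nat.choose_mul_factorial_mul_factorial h
  have h2 : 2*(m+1) - (m+1) = m+1 := by omega
  rw [h2] at hc
  have hcr : ((2*(m+1)).choose (m+1) : ℝ) * (m+1).factorial * (m+1).factorial
      = ((2*(m+1)).factorial : ℝ) := by exact_mod_cast congrArg Nat.cast hc
  have h3 : (m + (m+1) + 1) = 2*(m+1) := by omega
  rw [h3]
  have hf1 : ((m+1).factorial : ℝ) = ((m:ℝ)+1) * m.factorial := by
    rw [Nat.factorial_succ]; push_cast; ring
  have hpos1 : (0:ℝ) < ((2*(m+1)).factorial : ℝ) := by positivity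
  have hpos2 : (0:ℝ) < ((2*(m+1)).choose (m+1) : ℝ) := by
    exact_mod_cast Nat.choose_pos h
  have hpos3 : (0:ℝ) < (m.factorial : ℝ) := by positivity
  rw [div_div, div_eq_div_iff (by positivity) (by positivity)]
  rw [hf1] at hcr ⊢
  linear_combination ((m:ℝ)+1) * hcr

-- S integral
lemma S_int : ∫ x in Ioo (0:ℝ) 1, -Real.log (1-x+x^2)/x
    = ∑' m : ℕ, (1:ℝ)/(((m:ℝ)+1)^2 * ((2*(m+1)).choose (m+1) : ℝ)) := by
  have hcont : ∀ m : ℕ, Continuous (fun x : ℝ => x^m * (1-x)^(m+1)/((m:ℝ)+1)) := by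
    intro m; fun_prop
  have hFint : ∀ m : ℕ, Integrable (fun x : ℝ => x^m * (1-x)^(m+1)/((m:ℝ)+1))
      (volume.restrict (Ioo (0:ℝ) 1)) := fun m => poly_integrable _ (hcont m)
  have hval : ∀ m : ℕ, (∫ x in Ioo (0:ℝ) 1, x^m * (1-x)^(m+1)/((m:ℝ)+1))
      = 1/(((m:ℝ)+1)^2 * ((2*(m+1)).choose (m+1) : ℝ)) := by
    intro m
    rw [MeasureTheory.integral_div]
    rw [← integral_Ioc_eq_integral_Ioo, ← intervalIntegral.integral_of_le zero_le_one,
      beta_nat]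
    exact term_eq m
  have hnorm : ∀ m : ℕ, (∫ x in Ioo (0:ℝ) 1, ‖x^m * (1-x)^(m+1)/((m:ℝ)+1)‖)
      = 1/(((m:ℝ)+1)^2 * ((2*(m+1)).choose (m+1) : ℝ)) := by
    intro m
    rw [← hval m]
    refine setIntegral_congr_fun measurableSet_Ioo fun x hx => ?_
    have h1 : (0:ℝ) < 1 - x := by linarith [hx.2]
    rw [Real.norm_eq_abs, abs_of_nonneg (div_nonneg (mul_nonneg (pow_nonneg hx.1.le m)
      (pow_nonneg h1.le _)) (by positivity))]
  have hsum : Summable (fun m : ℕ => ∫ x in Ioo (0:ℝ) 1, ‖x^m * (1-x)^(m+1)/((m:ℝ)+1)‖) := by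
    refine Summable.of_nonneg_of_le (fun m => ?_) (fun m => ?_) summable_inv_sq
    · exact integral_nonneg fun x => norm_nonneg _
    · rw [hnorm m]
      have hc1 : (1:ℝ) ≤ ((2*(m+1)).choose (m+1) : ℝ) := by
        exact_mod_cast Nat.one_le_iff_ne_zero.mpr (Nat.choose_pos (by omega : m+1 ≤ 2*(m+1))).ne'
      rw [one_div, one_div]
      apply inv_anti₀ (by positivity)
      nlinarith [sq_nonneg ((m:ℝ)+1)]
  have key := integral_tsum_of_summable_integral_norm hFint hsum
  have hptw : ∀ x ∈ Ioo (0:ℝ) 1, (∑' m : ℕ, x^m * (1-x)^(m+1)/((m:ℝ)+1))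
      = -Real.log (1-x+x^2)/x := fun x hx => (hasSum_S hx).tsum_eq
  rw [← setIntegral_congr_fun measurableSet_Ioo hptw, ← key]
  exact tsum_congr hval

theorem stmt_3 :
    (∑' n : ℕ, (1 : ℝ) / ((n : ℝ) + 1) ^ 2)
      = 3 * ∑' m : ℕ, (1 : ℝ) / (((m : ℝ) + 1) ^ 2 * ((2 * (m + 1)).choose (m + 1) : ℝ)) := by
  have hmeas1 : AEStronglyMeasurable (fun x : ℝ => Real.log (1+x)/x)
      (volume.restrict (Ioo (0:ℝ) 1)) := by
    apply Measurable.aestronglyMeasurable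
    exact (Real.measurable_log.comp (measurable_const.add measurable_id)).div measurable_id
  have hmeas2 : AEStronglyMeasurable (fun x : ℝ => Real.log (1+x^3)/x)
      (volume.restrict (Ioo (0:ℝ) 1)) := by
    apply Measurable.aestronglyMeasurable
    exact (Real.measurable_log.comp (measurable_const.add (measurable_id.pow_const 3))).div
      measurable_id
  have hJK : Integrable (fun x : ℝ => Real.log (1+x)/x) (volume.restrict (Ioo (0:ℝ) 1)) := by
    refine Integrable.mono' (integrable_const 1) hmeas1 ?_
    filter_upwards [ae_restrict_mem measurableSet_Ioo] with x hx
    obtain ⟨h0, h1⟩ := hx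
    have hlog0 : 0 ≤ Real.log (1+x) := Real.log_nonneg (by linarith)
    have hlogx : Real.log (1+x) ≤ x := by
      have := Real.log_le_sub_one_of_pos (by linarith : (0:ℝ) < 1+x)
      linarith
    rw [Real.norm_eq_abs, abs_of_nonneg (by positivity)]
    rw [div_le_one h0]
    linarith
  have hK : Integrable (fun x : ℝ => Real.log (1+x^3)/x) (volume.restrict (Ioo (0:ℝ) 1)) := by
    refine Integrable.mono' (integrable_const 1) hmeas2 ?_
    filter_upwards [ae_restrict_mem measurableSet_Ioo] with x hx
    obtain ⟨h0, h1⟩ := hx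
    have hx3 : (0:ℝ) < x^3 := by positivity
    have hlog0 : 0 ≤ Real.log (1+x^3) := Real.log_nonneg (by linarith)
    have hlogx : Real.log (1+x^3) ≤ x^3 := by
      have := Real.log_le_sub_one_of_pos (by linarith : (0:ℝ) < 1+x^3)
      linarith
    have hfac : 0 ≤ x*(1-x)*(1+x) := mul_nonneg (mul_nonneg h0.le (by linarith)) (by linarith)
    rw [Real.norm_eq_abs, abs_of_nonneg (by positivity)]
    rw [div_le_one h0]
    nlinarith
  have hptw : ∀ x ∈ Ioo (0:ℝ) 1, -Real.log (1-x+x^2)/x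
      = Real.log (1+x)/x - Real.log (1+x^3)/x := by
    intro x hx
    obtain ⟨h0, h1⟩ := hx
    have hq : (0:ℝ) < 1 - x + x^2 := by nlinarith
    have hp : (0:ℝ) < 1 + x := by linarith
    have hm : (1+x) * (1-x+x^2) = 1+x^3 := by ring
    have hl : Real.log (1+x^3) = Real.log (1+x) + Real.log (1-x+x^2) := by
      rw [← hm, Real.log_mul (ne_of_gt hp) (ne_of_gt hq)]
    rw [hl]
    ring
  have hS : (∑' m : ℕ, (1:ℝ)/(((m:ℝ)+1)^2 * ((2*(m+1)).choose (m+1) : ℝ)))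
      = (1/3) * ∑' n : ℕ, (1:ℝ)/((n:ℝ)+1)^2 := by
    rw [← S_int, setIntegral_congr_fun measurableSet_Ioo hptw, integral_sub hJK hK,
      J_int, K_int, eta_eq]
    ring
  rw [hS]
  ring
end

section
/- For every n ≥ 1, the double tail ζ(2)_{n,n} := ∑_{m > n} binomial(m+n, n)^{-1} · m^{-2} satisfies ζ(2)_{n-1,n-1} = ζ(2)_{n,n} + 3 n^{-2} binomial(2n,n)^{-1}. -/
lemma key_real (A B C M N : ℝ) (hB : 0 < B) (hM : 0 < M) (hN : 0 < N)
    (h1 : (M+N)*A = N*B) (h2 : (M+N)*C = M*B) :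
    A⁻¹ * (M^2)⁻¹ = B⁻¹ * (M^2)⁻¹ + (C⁻¹ - B⁻¹)/N^2 := by
  have hMN : M + N ≠ 0 := by positivity
  have e1 : A = N*B/(M+N) := by field_simp; linarith [h1]
  have e2 : C = M*B/(M+N) := by field_simp; linarith [h2]
  rw [e1, e2]; field_simp; ring

lemma zpow_neg_two' (x : ℝ) : x ^ (-2:ℤ) = (x^2)⁻¹ := by
  rw [show (-2:ℤ) = -((2:ℕ):ℤ) from rfl, zpow_neg, zpow_natCast]

lemma aux_choose (k j : ℕ) :
    ((((j+k+2) + k).choose k : ℝ))⁻¹ * (((j+k+2:ℕ)):ℝ)^(-2:ℤ)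
      = ((((j+k+2) + (k+1)).choose (k+1) : ℝ))⁻¹ * (((j+k+2:ℕ)):ℝ)^(-2:ℤ)
        + ((((j + 2*(k+1)).choose (k+1)):ℝ)⁻¹ - (((j+1 + 2*(k+1)).choose (k+1)):ℝ)⁻¹)
            / ((k:ℝ)+1)^2 := by
  have e1 : (j+k+2) + k = j+2*k+2 := by ring
  have e2 : (j+k+2) + (k+1) = j+2*k+3 := by ring
  have e3 : j + 2*(k+1) = j+2*k+2 := by ring
  have e4 : j+1 + 2*(k+1) = j+2*k+3 := by ring
  have eM : (((j+k+2:ℕ)):ℝ) = (j:ℝ)+(k:ℝ)+2 := by push_cast; ring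
  rw [e1, e2, e3, e4, zpow_neg_two', eM]
  have hab : (j+2*k+3) * ((j+2*k+2).choose k) = (k+1) * ((j+2*k+3).choose (k+1)) := by
    have h := Nat.add_one_mul_choose_eq (j+2*k+2) k
    simp only [Nat.succ_eq_add_one, show j+2*k+2+1 = j+2*k+3 from rfl] at h
    simpa [Nat.mul_comm] using h
  have hcb : (j+2*k+3) * ((j+2*k+2).choose (k+1)) = (j+k+2) * ((j+2*k+3).choose (k+1)) := by
    have hs1 : (j+2*k+2).choose (k+1) = (j+2*k+2).choose (j+k+1) := by
      rw [← Nat.choose_symm (show k+1 ≤ j+2*k+2 by omega)]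
      congr 1; omega
    have hs2 : (j+2*k+3).choose (j+k+2) = (j+2*k+3).choose (k+1) := by
      rw [← Nat.choose_symm (show j+k+2 ≤ j+2*k+3 by omega)]
      congr 1; omega
    have h := Nat.add_one_mul_choose_eq (j+2*k+2) (j+k+1)
    simp only [Nat.succ_eq_add_one, show j+2*k+2+1 = j+2*k+3 from rfl,
      show j+k+1+1 = j+k+2 from rfl] at h
    rw [hs2] at h
    rw [hs1]
    simpa [Nat.mul_comm] using h
  have hb : (0:ℝ) < ((j+2*k+3).choose (k+1) : ℝ) := by
    exact_mod_cast Nat.choose_pos (show k+1 ≤ j+2*k+3 by omega)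
  have r1 : (((j:ℝ)+k+2)+((k:ℝ)+1)) * ((j+2*k+2).choose k : ℝ)
      = ((k:ℝ)+1) * ((j+2*k+3).choose (k+1) : ℝ) := by
    have := congrArg (Nat.cast : ℕ → ℝ) hab; push_cast at this; linarith
  have r2 : (((j:ℝ)+k+2)+((k:ℝ)+1)) * ((j+2*k+2).choose (k+1) : ℝ)
      = ((j:ℝ)+k+2) * ((j+2*k+3).choose (k+1) : ℝ) := by
    have := congrArg (Nat.cast : ℕ → ℝ) hcb; push_cast at this; linarith
  exact key_real _ _ _ _ _ hb (by positivity) (by positivity) r1 r2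


lemma summable_term (c d : ℕ) :
    Summable (fun m : ℕ => if c < m then (((m + d).choose d : ℝ))⁻¹ * (m:ℝ)^(-2:ℤ) else 0) := by
  have hb : Summable (fun m : ℕ => ((m:ℝ)^2)⁻¹) := by
    simpa [one_div] using Real.summable_one_div_nat_pow.mpr (le_refl 2)
  refine Summable.of_nonneg_of_le (fun m => ?_) (fun m => ?_) hb
  · split
    · have h1 : (0:ℝ) ≤ (((m + d).choose d : ℕ):ℝ)⁻¹ := by positivity
      have h2 : (0:ℝ) ≤ (m:ℝ)^(-2:ℤ) := by rw [zpow_neg_two']; positivity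
      exact mul_nonneg h1 h2
    · exact le_refl 0
  · split
    · rw [zpow_neg_two']
      have h1 : (1:ℝ) ≤ (((m + d).choose d : ℕ):ℝ) := by
        exact_mod_cast Nat.one_le_iff_ne_zero.mpr (Nat.choose_pos (by omega : d ≤ m + d)).ne'
      calc (((m + d).choose d : ℕ):ℝ)⁻¹ * ((m:ℝ)^2)⁻¹
          ≤ 1 * ((m:ℝ)^2)⁻¹ := by
            gcongr
            exact inv_le_one_of_one_le₀ h1
        _ = ((m:ℝ)^2)⁻¹ := one_mul _
    · positivity

noncomputable def Ttel (k : ℕ) : ℕ → ℝ := fun j => (((j + 2*(k+1)).choose (k+1) : ℝ))⁻¹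

lemma Ttel_pos (k j : ℕ) : 0 < Ttel k j := by
  have : 0 < (j + 2*(k+1)).choose (k+1) := Nat.choose_pos (by omega)
  have : (0:ℝ) < ((j + 2*(k+1)).choose (k+1) : ℝ) := by exact_mod_cast this
  exact inv_pos.mpr this

lemma Ttel_anti (k j : ℕ) : Ttel k (j+1) ≤ Ttel k j := by
  have h : (j + 2*(k+1)).choose (k+1) ≤ (j+1 + 2*(k+1)).choose (k+1) :=
    Nat.choose_le_choose _ (by omega)
  have h0 : 0 < (j + 2*(k+1)).choose (k+1) := Nat.choose_pos (by omega)
  unfold Ttel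
  apply inv_anti₀ (by exact_mod_cast h0) (by exact_mod_cast h)

lemma Ttel_le (k j : ℕ) : Ttel k j ≤ 1/((j:ℝ)+1) := by
  have h1 : j + k + 2 ≤ (j + 2*(k+1)).choose (k+1) := by
    have e : (j + 2*(k+1)).choose (k+1) = (j + 2*(k+1)).choose (j+k+1) := by
      rw [← Nat.choose_symm (show k+1 ≤ j + 2*(k+1) by omega)]; congr 1; omega
    rw [e]
    calc j + k + 2 = (j+k+2).choose (j+k+1) := by
          rw [show j+k+2 = (j+k+1)+1 from rfl, Nat.choose_succ_self_right]
      _ ≤ (j + 2*(k+1)).choose (j+k+1) := Nat.choose_le_choose _ (by omega)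
  have h2 : ((j:ℝ)+1) ≤ ((j + k + 2 : ℕ):ℝ) := by push_cast; linarith
  have h3 : ((j+k+2:ℕ):ℝ) ≤ ((j + 2*(k+1)).choose (k+1) : ℝ) := by exact_mod_cast h1
  rw [one_div]
  apply inv_anti₀ (by positivity) (le_trans h2 h3)

lemma Ttel_tendsto (k : ℕ) : Filter.Tendsto (Ttel k) Filter.atTop (nhds 0) := by
  apply squeeze_zero (fun j => (Ttel_pos k j).le) (Ttel_le k)
  exact tendsto_one_div_add_atTop_nhds_zero_nat

lemma tel_hasSum (k : ℕ) :
    HasSum (fun j => (Ttel k j - Ttel k (j+1)) / ((k:ℝ)+1)^2) (Ttel k 0 / ((k:ℝ)+1)^2) := by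
  have hnn : ∀ j, 0 ≤ (Ttel k j - Ttel k (j+1)) / ((k:ℝ)+1)^2 := fun j => by
    have := Ttel_anti k j
    apply div_nonneg (by linarith) (by positivity)
  rw [hasSum_iff_tendsto_nat_of_nonneg hnn]
  have hps : ∀ N, ∑ i ∈ Finset.range N, (Ttel k i - Ttel k (i+1)) / ((k:ℝ)+1)^2
      = (Ttel k 0 - Ttel k N) / ((k:ℝ)+1)^2 := fun N => by
    rw [← Finset.sum_div, Finset.sum_range_sub']
  simp only [hps]
  have : Filter.Tendsto (fun N => (Ttel k 0 - Ttel k N)) Filter.atTop (nhds (Ttel k 0 - 0)) :=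
    tendsto_const_nhds.sub (Ttel_tendsto k)
  simpa using this.div_const _

theorem stmt_5 (n : ℕ) (hn : 1 ≤ n) :
    (∑' m : ℕ, if n - 1 < m then (((m + (n - 1)).choose (n - 1) : ℝ))⁻¹ * (m : ℝ) ^ (-2 : ℤ) else 0)
      = (∑' m : ℕ, if n < m then (((m + n).choose n : ℝ))⁻¹ * (m : ℝ) ^ (-2 : ℤ) else 0)
        + 3 * (n : ℝ) ^ (-2 : ℤ) * (((2 * n).choose n : ℝ))⁻¹ := by
  obtain ⟨k, rfl⟩ : ∃ k, n = k + 1 := ⟨n - 1, by omega⟩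
  simp only [Nat.add_sub_cancel]
  set F : ℕ → ℝ := fun m => if k < m then (((m + k).choose k : ℝ))⁻¹ * (m:ℝ)^(-2:ℤ) else 0 with hF
  set G : ℕ → ℝ := fun m =>
    if k + 1 < m then (((m + (k+1)).choose (k+1) : ℝ))⁻¹ * (m:ℝ)^(-2:ℤ) else 0 with hG
  have hFs : Summable F := summable_term k k
  have hGs : Summable G := summable_term (k+1) (k+1)
  set t : ℕ → ℝ := fun j => (Ttel k j - Ttel k (j+1)) / ((k:ℝ)+1)^2 with ht
  have htel := tel_hasSum k
  -- shift of F
  have hFs1 : Summable (fun j => F (j + (k+1))) := (summable_nat_add_iff (k+1)).2 hFs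
  have shF : ∑' m, F m = ∑' j, F (j + (k+1)) := by
    rw [← Summable.sum_add_tsum_nat_add (k+1) hFs, Finset.sum_eq_zero, zero_add]
    intro i hi
    simp only [Finset.mem_range] at hi
    simp only [hF]
    rw [if_neg (by omega)]
  have shG : ∑' m, G m = ∑' j, G (j + (k+2)) := by
    rw [← Summable.sum_add_tsum_nat_add (k+2) hGs, Finset.sum_eq_zero, zero_add]
    intro i hi
    simp only [Finset.mem_range] at hi
    simp only [hG]
    rw [if_neg (by omega)]
  have shF2 : ∑' j, F (j + (k+1)) = F (k+1) + ∑' j, F (j + 1 + (k+1)) := by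
    rw [← Summable.sum_add_tsum_nat_add 1 hFs1]
    simp [Finset.sum_range_one]
  have hGshift : Summable (fun j => G (j + (k+2))) := (summable_nat_add_iff (k+2)).2 hGs
  have key : ∀ j, F (j + 1 + (k+1)) = G (j + (k+2)) + t j := by
    intro j
    have e1 : j + 1 + (k+1) = j + k + 2 := by omega
    have e2 : j + (k+2) = j + k + 2 := by omega
    rw [e1, e2]
    simp only [hF, hG, ht, Ttel]
    rw [if_pos (by omega), if_pos (by omega)]
    have := aux_choose k j
    convert this using 3 <;> push_cast <;> ring
  have hsplit : ∑' j, F (j + 1 + (k+1)) = (∑' j, G (j + (k+2))) + Ttel k 0 / ((k:ℝ)+1)^2 := by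
    rw [tsum_congr key, Summable.tsum_add hGshift htel.summable, htel.tsum_eq]
  rw [shF, shF2, hsplit, shG.symm]
  -- final arithmetic
  have hFk : F (k+1) = (((2*k+1).choose k : ℝ))⁻¹ * (((k:ℝ)+1)^2)⁻¹ := by
    simp only [hF]
    rw [if_pos (by omega), zpow_neg_two', show k+1+k = 2*k+1 from by omega]
    push_cast; ring
  have hT0 : Ttel k 0 = (((2*k+2).choose (k+1) : ℝ))⁻¹ := by
    unfold Ttel
    rw [show 0+2*(k+1) = 2*k+2 from by omega]
  have hk1 : ((k:ℝ)+1) ≠ 0 := by positivity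
  have hd : ((2*k+2).choose (k+1) : ℝ) = 2 * ((2*k+1).choose k : ℝ) := by
    have h := Nat.add_one_mul_choose_eq (2*k+1) k
    simp only [Nat.succ_eq_add_one, show 2*k+1+1 = 2*k+2 from rfl] at h
    have hc := congrArg (Nat.cast : ℕ → ℝ) h
    push_cast at hc
    refine mul_right_cancel₀ hk1 ?_
    linear_combination -hc
  have ha0 : (0:ℝ) < ((2*k+1).choose k : ℝ) := by
    exact_mod_cast Nat.choose_pos (by omega : k ≤ 2*k+1)
  have hchoose_goal : ((2*(k+1)).choose (k+1) : ℝ) = 2 * ((2*k+1).choose k : ℝ) := by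
    rw [show 2*(k+1) = 2*k+2 from by ring]; exact hd
  rw [hFk, hT0, hchoose_goal, zpow_neg_two', hd]
  have hcast : (((k+1:ℕ)):ℝ) = (k:ℝ)+1 := by push_cast; ring
  rw [hcast]
  field_simp
  ring
end

section
/- For any admissible composition a and n ∈ ℕ, ζ(a)_{n,n} ≤ 4^{-n} · π²/6. -/
/-- The `(m,n)`-double tail of the multiple zeta value attached to the composition `a`:
`ζ(a)_{m,n} = ∑_{n₁>⋯>n_r>n} (binom (n₁+m) m)⁻¹ n₁^{-a₁} ⋯ n_r^{-a_r}`,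
with the convention `ζ(∅)_{m,n} = m! n! / (m+n)!`. -/
noncomputable def dtail (a : List ℕ) (m n : ℕ) : ℝ :=
  if a.isEmpty then (m.factorial * n.factorial : ℝ) / (m + n).factorial
  else
    ∑' s : {s : Fin a.length → ℕ // StrictAnti s ∧ ∀ i, n < s i},
      (∏ i : Fin a.length, if (i : ℕ) = 0 then (((s.1 i + m).choose m : ℝ))⁻¹ else 1) *
        ∏ i : Fin a.length, (s.1 i : ℝ) ^ (-(a.get i : ℤ))

open Finset

open scoped ENNReal
namespace DT

lemma keyNat (n k : ℕ) :
    (k + 1) * ((k + 1 + n).choose n) = (k + 1 + n) * ((k + n).choose n) := by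
  have h1 : (k + 1 + n).choose n * (n.factorial * (k+1).factorial) = (k + 1 + n).factorial := by
    have := Nat.choose_mul_factorial_mul_factorial (Nat.le_add_left n (k+1))
    rw [Nat.add_sub_cancel] at this
    rw [← this]; ring
  have h2 : (k + n).choose n * (n.factorial * k.factorial) = (k + n).factorial := by
    have := Nat.choose_mul_factorial_mul_factorial (Nat.le_add_left n k)
    rw [Nat.add_sub_cancel] at this
    rw [← this]; ring
  have hpos : 0 < n.factorial * k.factorial := by positivity
  apply Nat.eq_of_mul_eq_mul_right hpos
  calc (k + 1) * ((k + 1 + n).choose n) * (n.factorial * k.factorial)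
      = (k + 1 + n).choose n * (n.factorial * ((k+1) * k.factorial)) := by ring
    _ = (k + 1 + n).factorial := by rw [← Nat.factorial_succ]; exact h1
    _ = (k + 1 + n) * (k + n).factorial := by
        rw [show k + 1 + n = (k + n) + 1 by omega, Nat.factorial_succ]
    _ = (k + 1 + n) * ((k + n).choose n * (n.factorial * k.factorial)) := by
        rw [h2]
    _ = (k + 1 + n) * ((k + n).choose n) * (n.factorial * k.factorial) := by ring

/-- `U n m = 1/((n+1) m C(m+n,n))` -/
noncomputable def U (n m : ℕ) : ℝ := (((n+1) * m * ((m+n).choose n) : ℕ) : ℝ)⁻¹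

/-- `F n k = 1/(k (k-1) C(k+n,n))` -/
noncomputable def F (n k : ℕ) : ℝ := ((k * (k-1) * ((k+n).choose n) : ℕ) : ℝ)⁻¹

lemma Unonneg (n m : ℕ) : 0 ≤ U n m := inv_nonneg.2 (Nat.cast_nonneg _)

lemma Fnonneg (n k : ℕ) : 0 ≤ F n k := inv_nonneg.2 (Nat.cast_nonneg _)

lemma stepF (n k : ℕ) (hk : 1 ≤ k) : F n (k+1) = U n k - U n (k+1) := by
  have key := keyNat n k
  unfold F U
  have hA : (0:ℝ) < ((k + n).choose n : ℝ) := by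
    exact_mod_cast Nat.choose_pos (Nat.le_add_left n k)
  have hB : (0:ℝ) < ((k + 1 + n).choose n : ℝ) := by
    exact_mod_cast Nat.choose_pos (Nat.le_add_left n (k+1))
  have hk' : (0:ℝ) < (k:ℝ) := by exact_mod_cast hk
  have keyR : ((k:ℝ) + 1) * ((k + 1 + n).choose n : ℝ)
      = ((k:ℝ) + 1 + n) * ((k + n).choose n : ℝ) := by exact_mod_cast key
  have key2 : ((k:ℝ) + 1) * ((k + 1 + n).choose n : ℝ) - (k:ℝ) * ((k + n).choose n : ℝ)
      = ((n:ℝ)+1) * ((k + n).choose n : ℝ) := by linear_combination keyR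
  rw [Nat.add_sub_cancel]
  push_cast
  have h1 : ((n:ℝ)+1) * k * ((k + n).choose n : ℝ) ≠ 0 := by positivity
  have h2 : ((n:ℝ)+1) * (k+1) * ((k + 1 + n).choose n : ℝ) ≠ 0 := by positivity
  rw [inv_sub_inv h1 h2, eq_div_iff (mul_ne_zero h1 h2), inv_mul_eq_div,
    div_eq_iff (by positivity : ((k:ℝ)+1) * k * ((k + 1 + n).choose n : ℝ) ≠ 0)]
  linear_combination (-(((n:ℝ)+1) * ((k:ℝ)+1) * (k:ℝ) * ((k + 1 + n).choose n : ℝ))) * key2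

lemma teleFin (n m : ℕ) (hm : 1 ≤ m) (M : ℕ) :
    ∑ k ∈ Finset.Ioc m (m+M), F n k = U n m - U n (m+M) := by
  induction M with
  | zero => simp
  | succ M ih =>
      rw [← Nat.add_assoc, Finset.sum_Ioc_succ_top (by omega)]
      rw [ih, stepF n (m+M) (by omega)]
      ring

end DT

namespace DT

lemma enn_inv_nat (N : ℕ) (h : 0 < N) :
    ((N : ℝ≥0∞))⁻¹ = ENNReal.ofReal ((N:ℝ))⁻¹ := by
  rw [ENNReal.ofReal_inv_of_pos (by exact_mod_cast h), ENNReal.ofReal_natCast]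

lemma teleENN (n m : ℕ) (hm : 1 ≤ m) :
    ∑' k : {k : ℕ // m < k}, (((k : ℕ) * ((k:ℕ)-1) * (((k:ℕ)+n).choose n) : ℕ) : ℝ≥0∞)⁻¹
      ≤ ENNReal.ofReal (U n m) := by
  rw [ENNReal.tsum_eq_iSup_sum]
  apply iSup_le
  intro Fs
  rcases Fs.eq_empty_or_nonempty with h | h
  · simp [h, Unonneg]
  · set M := Fs.sup Subtype.val with hM
    have hsub : Fs.image Subtype.val ⊆ Finset.Ioc m (m + (M - m)) := by
      intro k hk
      simp only [Finset.mem_image] at hk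
      obtain ⟨x, hx, rfl⟩ := hk
      have h1 : m < (x:ℕ) := x.2
      have h2 : (x:ℕ) ≤ M := Finset.le_sup hx
      simp only [Finset.mem_Ioc]
      omega
    calc ∑ x ∈ Fs, (((x : ℕ) * ((x:ℕ)-1) * (((x:ℕ)+n).choose n) : ℕ) : ℝ≥0∞)⁻¹
        = ∑ k ∈ Fs.image Subtype.val, ((k * (k-1) * ((k+n).choose n) : ℕ) : ℝ≥0∞)⁻¹ := by
          rw [Finset.sum_image (by intro x _ y _ hxy; exact Subtype.ext hxy)]
      _ ≤ ∑ k ∈ Finset.Ioc m (m + (M - m)), ((k * (k-1) * ((k+n).choose n) : ℕ) : ℝ≥0∞)⁻¹ :=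
          Finset.sum_le_sum_of_subset hsub
      _ = ∑ k ∈ Finset.Ioc m (m + (M - m)), ENNReal.ofReal (F n k) := by
          apply Finset.sum_congr rfl
          intro k hk
          simp only [Finset.mem_Ioc] at hk
          rw [F, enn_inv_nat]
          have : 0 < (k+n).choose n := Nat.choose_pos (Nat.le_add_left n k)
          have : 0 < k * (k-1) := by
            have : 2 ≤ k := by omega
            apply Nat.mul_pos <;> omega
          positivity
      _ = ENNReal.ofReal (∑ k ∈ Finset.Ioc m (m + (M - m)), F n k) :=
          (ENNReal.ofReal_sum_of_nonneg (fun k _ => Fnonneg n k)).symm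
      _ ≤ ENNReal.ofReal (U n m) := by
          apply ENNReal.ofReal_le_ofReal
          rw [teleFin n m hm]
          have := Unonneg n (m + (M - m))
          linarith

end DT

namespace DT

lemma innerSum (n m : ℕ) (hm : 1 ≤ m) :
    ∑' k : {k : ℕ // m < k}, ((((k:ℕ)+n).choose n * ((k:ℕ) * (k:ℕ)) : ℕ) : ℝ≥0∞)⁻¹
      ≤ (((m+n).choose n * (m * (n+1)) : ℕ) : ℝ≥0∞)⁻¹ := by
  have h1 : ∑' k : {k : ℕ // m < k}, ((((k:ℕ)+n).choose n * ((k:ℕ) * (k:ℕ)) : ℕ) : ℝ≥0∞)⁻¹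
      ≤ ∑' k : {k : ℕ // m < k}, (((k : ℕ) * ((k:ℕ)-1) * (((k:ℕ)+n).choose n) : ℕ) : ℝ≥0∞)⁻¹ := by
    apply ENNReal.tsum_le_tsum
    intro k
    apply ENNReal.inv_le_inv.2
    apply Nat.cast_le.2
    have : (k:ℕ) - 1 ≤ (k:ℕ) := Nat.sub_le _ _
    calc (k:ℕ) * ((k:ℕ)-1) * (((k:ℕ)+n).choose n)
        ≤ (k:ℕ) * (k:ℕ) * (((k:ℕ)+n).choose n) := by
          apply Nat.mul_le_mul_right
          exact Nat.mul_le_mul_left _ this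
      _ = ((k:ℕ)+n).choose n * ((k:ℕ) * (k:ℕ)) := by ring
  refine h1.trans ((teleENN n m hm).trans ?_)
  rw [U, enn_inv_nat _ (by
    have : 0 < (m+n).choose n := Nat.choose_pos (Nat.le_add_left n m)
    positivity)]
  apply ENNReal.ofReal_le_ofReal
  apply inv_anti₀
  · have : 0 < (m+n).choose n := Nat.choose_pos (Nat.le_add_left n m)
    positivity
  · push_cast; nlinarith [Nat.cast_nonneg (α := ℝ) ((m+n).choose n), Nat.cast_nonneg (α := ℝ) m, Nat.cast_nonneg (α := ℝ) n]

end DT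

namespace DT

/-- index type -/
def T (r n : ℕ) := {s : Fin r → ℕ // StrictAnti s ∧ ∀ i, n < s i}

/-- the weight -/
def gfun (n : ℕ) {r : ℕ} (s : Fin r → ℕ) (i : Fin r) : ℕ :=
  if (i:ℕ) = 0 then (s i + n).choose n * (s i * s i) else s i

noncomputable def P (r n : ℕ) : ℝ≥0∞ :=
  ∑' s : T r n, ((∏ i, gfun n s.1 i : ℕ) : ℝ≥0∞)⁻¹

lemma strictAnti_cons {q : ℕ} (t : Fin (q+1) → ℕ) (ht : StrictAnti t) (k : ℕ) (hk : t 0 < k) :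
    StrictAnti (Fin.cons k t : Fin (q+2) → ℕ) := by
  rw [Fin.strictAnti_iff_succ_lt]
  intro i
  induction i using Fin.cases with
  | zero => simpa using hk
  | succ j =>
      have h1 : (Fin.cons k t : Fin (q+2) → ℕ) (Fin.succ j).succ = t j.succ := by
        simp [Fin.cons_succ]
      have h2 : (Fin.cons k t : Fin (q+2) → ℕ) (Fin.castSucc (Fin.succ j)) = t j.castSucc := by
        rw [Fin.castSucc_fin_succ]
        simp [Fin.cons_succ]
      rw [h1, h2]
      exact ht (Fin.castSucc_lt_succ : j.castSucc < j.succ)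

/-- the cons equivalence -/
def consEquiv (q n : ℕ) : (Σ t : T (q+1) n, {k : ℕ // t.1 0 < k}) ≃ T (q+2) n where
  toFun := fun ⟨t, k⟩ => ⟨Fin.cons k.1 t.1,
    strictAnti_cons t.1 t.2.1 k.1 k.2,
    by
      intro i
      induction i using Fin.cases with
      | zero => simpa using lt_trans (t.2.2 0) k.2
      | succ j => simpa [Fin.cons_succ] using t.2.2 j⟩
  invFun := fun s => ⟨⟨Fin.tail s.1,
      fun i j hij => s.2.1 (Fin.succ_lt_succ_iff.2 hij),
      fun i => s.2.2 i.succ⟩,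
    ⟨s.1 0, by
      have : (0 : Fin (q+2)) < Fin.succ 0 := by simp [Fin.lt_def]
      simpa [Fin.tail] using s.2.1 this⟩⟩
  left_inv := by
    rintro ⟨t, k⟩
    apply Sigma.ext
    · apply Subtype.ext
      simp [Fin.tail_cons]
    · rw [Subtype.heq_iff_coe_eq]
      · simp
      · intro x
        simp [Fin.tail_cons]
  right_inv := by
    rintro ⟨s, hs⟩
    apply Subtype.ext
    simp [Fin.cons_self_tail]

end DT

namespace DT

lemma enn_nat_mul_inv (N M : ℕ) : ((N * M : ℕ) : ℝ≥0∞)⁻¹ = ((N:ℝ≥0∞))⁻¹ * ((M:ℝ≥0∞))⁻¹ := by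
  rw [Nat.cast_mul, ENNReal.mul_inv (Or.inr (ENNReal.natCast_ne_top M))
    (Or.inl (ENNReal.natCast_ne_top N))]

lemma prod_gfun (n : ℕ) {q : ℕ} (s : Fin (q+1) → ℕ) :
    ∏ i, gfun n s i = ((s 0 + n).choose n * s 0) * ∏ i, s i := by
  rw [Fin.prod_univ_succ, Fin.prod_univ_succ]
  have h1 : gfun n s 0 = (s 0 + n).choose n * (s 0 * s 0) := by simp [gfun]
  have h2 : ∀ j : Fin q, gfun n s j.succ = s j.succ := by
    intro j; simp [gfun, Fin.val_succ]
  rw [h1, Finset.prod_congr rfl (fun j _ => h2 j)]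
  ring

lemma Pstep (q n : ℕ) : P (q+2) n ≤ P (q+1) n := by
  rw [P, ← (consEquiv q n).tsum_eq, ENNReal.tsum_sigma', P]
  apply ENNReal.tsum_le_tsum
  intro t
  have ht0 : 1 ≤ t.1 0 := by have := t.2.2 0; omega
  calc ∑' k : {k // t.1 0 < k},
        ((∏ i, gfun n ((consEquiv q n) ⟨t, k⟩).1 i : ℕ) : ℝ≥0∞)⁻¹
      = ∑' k : {k // t.1 0 < k},
          ((((k:ℕ)+n).choose n * ((k:ℕ)*(k:ℕ)) : ℕ) : ℝ≥0∞)⁻¹ *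
            ((∏ i, t.1 i : ℕ) : ℝ≥0∞)⁻¹ := by
        apply tsum_congr; intro k
        have he : ((consEquiv q n) ⟨t, k⟩).1 = Fin.cons k.1 t.1 := rfl
        rw [he, prod_gfun, Fin.cons_zero, Fin.prod_cons,
          show ((k:ℕ)+n).choose n * (k:ℕ) * ((k:ℕ) * ∏ i, t.1 i)
            = (((k:ℕ)+n).choose n * ((k:ℕ)*(k:ℕ))) * ∏ i, t.1 i by ring,
          enn_nat_mul_inv]
    _ = (∑' k : {k // t.1 0 < k},
          ((((k:ℕ)+n).choose n * ((k:ℕ)*(k:ℕ)) : ℕ) : ℝ≥0∞)⁻¹) *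
            ((∏ i, t.1 i : ℕ) : ℝ≥0∞)⁻¹ := ENNReal.tsum_mul_right
    _ ≤ (((t.1 0+n).choose n * (t.1 0 * (n+1)) : ℕ) : ℝ≥0∞)⁻¹ *
            ((∏ i, t.1 i : ℕ) : ℝ≥0∞)⁻¹ :=
        mul_le_mul_left (innerSum n (t.1 0) ht0) _
    _ ≤ ((∏ i, gfun n t.1 i : ℕ) : ℝ≥0∞)⁻¹ := by
        rw [prod_gfun, ← enn_nat_mul_inv]
        apply ENNReal.inv_le_inv.2
        apply Nat.cast_le.2
        have h1 : t.1 0 ≤ t.1 0 * (n+1) := Nat.le_mul_of_pos_right _ (by omega)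
        have h2 : (t.1 0+n).choose n * t.1 0 ≤ (t.1 0+n).choose n * (t.1 0 * (n+1)) :=
          Nat.mul_le_mul_left _ h1
        exact Nat.mul_le_mul_right _ h2

end DT

namespace DT

def oneEquiv (n : ℕ) : {k : ℕ // n < k} ≃ T 1 n where
  toFun := fun k => ⟨fun _ => k.1,
    fun i j hij => (lt_irrefl i (Subsingleton.elim j i ▸ hij)).elim,
    fun _ => k.2⟩
  invFun := fun s => ⟨s.1 0, s.2.2 0⟩
  left_inv := fun k => rfl
  right_inv := fun s => Subtype.ext (funext fun i => by
    have : i = 0 := Subsingleton.elim _ _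
    rw [this])

lemma P1eq (n : ℕ) :
    P 1 n = ∑' k : {k : ℕ // n < k},
      ((((k:ℕ)+n).choose n * ((k:ℕ)*(k:ℕ)) : ℕ) : ℝ≥0∞)⁻¹ := by
  rw [P, ← (oneEquiv n).tsum_eq]
  apply tsum_congr
  intro k
  congr 1
  rw [show (∏ i, gfun n ((oneEquiv n) k).1 i) = gfun n ((oneEquiv n) k).1 0 from
    Fin.prod_univ_one _]
  simp [gfun, oneEquiv]
  rfl

lemma pisq6_ge_one : (1:ℝ) ≤ Real.pi ^ 2 / 6 := by
  nlinarith [Real.pi_gt_three]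

lemma P1bound (n : ℕ) :
    P 1 n ≤ ENNReal.ofReal ((4 : ℝ) ^ (-(n : ℤ)) * (Real.pi ^ 2 / 6)) := by
  rw [P1eq]
  rcases Nat.eq_zero_or_pos n with rfl | hn
  · -- n = 0 : Basel
    have hsum : Summable (fun k : ℕ => 1 / (k:ℝ)^2) := hasSum_zeta_two.summable
    calc ∑' k : {k : ℕ // 0 < k}, ((((k:ℕ)+0).choose 0 * ((k:ℕ)*(k:ℕ)) : ℕ) : ℝ≥0∞)⁻¹
        = ∑' k : {k : ℕ // 0 < k}, ENNReal.ofReal (1 / ((k:ℕ):ℝ)^2) := by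
          apply tsum_congr
          intro k
          have hk : 0 < (k:ℕ) := k.2
          rw [Nat.choose_zero_right, one_mul, enn_inv_nat _ (Nat.mul_pos hk hk)]
          congr 1
          push_cast
          rw [one_div, sq]
      _ ≤ ∑' k : ℕ, ENNReal.ofReal (1 / (k:ℝ)^2) :=
          ENNReal.tsum_comp_le_tsum_of_injective Subtype.val_injective _
      _ = ENNReal.ofReal (∑' k : ℕ, 1 / (k:ℝ)^2) :=
          (ENNReal.ofReal_tsum_of_nonneg (fun k => by positivity) hsum).symm
      _ = ENNReal.ofReal ((4 : ℝ) ^ (-(0 : ℤ)) * (Real.pi ^ 2 / 6)) := by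
          rw [hasSum_zeta_two.tsum_eq]
          norm_num
  · -- n ≥ 1
    refine (innerSum n n hn).trans ?_
    have hC : 0 < (n+n).choose n := Nat.choose_pos (Nat.le_add_left n n)
    have hNpos : 0 < (n+n).choose n * (n * (n+1)) := by positivity
    have hfour : 4^n ≤ (n+n).choose n * (n * (n+1)) := by
      have h1 := Nat.four_pow_le_two_mul_self_mul_centralBinom n hn
      have h2 : Nat.centralBinom n = (n+n).choose n := by
        rw [Nat.centralBinom, two_mul]
      calc 4^n ≤ 2 * n * Nat.centralBinom n := h1
        _ ≤ (n * (n+1)) * (n+n).choose n := by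
            rw [h2]
            apply Nat.mul_le_mul_right
            nlinarith
        _ = (n+n).choose n * (n * (n+1)) := by ring
    calc (((n+n).choose n * (n * (n+1)) : ℕ) : ℝ≥0∞)⁻¹
        ≤ ((4^n : ℕ) : ℝ≥0∞)⁻¹ := ENNReal.inv_le_inv.2 (Nat.cast_le.2 hfour)
      _ = ENNReal.ofReal (((4:ℝ)^n)⁻¹) := by
          rw [enn_inv_nat _ (by positivity)]
          norm_num
      _ ≤ ENNReal.ofReal ((4 : ℝ) ^ (-(n : ℤ)) * (Real.pi ^ 2 / 6)) := by
          apply ENNReal.ofReal_le_ofReal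
          rw [zpow_neg, zpow_natCast]
          nlinarith [pisq6_ge_one, inv_nonneg.2 (pow_nonneg (by norm_num : (0:ℝ) ≤ 4) n)]

lemma Pbound (q n : ℕ) :
    P (q+1) n ≤ ENNReal.ofReal ((4 : ℝ) ^ (-(n : ℤ)) * (Real.pi ^ 2 / 6)) := by
  induction q with
  | zero => exact P1bound n
  | succ q ih => exact (Pstep q n).trans ih

end DT

namespace DT

lemma Pbound' (r n : ℕ) (hr : 1 ≤ r) :
    P r n ≤ ENNReal.ofReal ((4 : ℝ) ^ (-(n : ℤ)) * (Real.pi ^ 2 / 6)) := by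
  obtain ⟨q, rfl⟩ : ∃ q, r = q + 1 := ⟨r - 1, by omega⟩
  exact Pbound q n

lemma prod_gfun_pos (n : ℕ) {q : ℕ} (s : T (q+1) n) : 0 < ∏ i, gfun n s.1 i := by
  apply Finset.prod_pos
  intro i _
  have hs : 0 < s.1 i := by have := s.2.2 i; omega
  have hC : 0 < (s.1 i + n).choose n := Nat.choose_pos (Nat.le_add_left _ _)
  unfold gfun
  split <;> positivity

lemma term_le (x : ℕ) (a' : List ℕ) (hx : 2 ≤ x) (hpos : ∀ y ∈ a', 1 ≤ y) (n : ℕ)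
    (s : T (a'.length + 1) n) :
    (∏ i : Fin (a'.length + 1), if (i:ℕ) = 0 then ((s.1 i + n).choose n : ℝ)⁻¹ else 1) *
      ∏ i : Fin (a'.length + 1), (s.1 i : ℝ) ^ (-((x::a').get i : ℤ))
    ≤ ((∏ i, gfun n s.1 i : ℕ) : ℝ)⁻¹ := by
  have hs1 : ∀ i, (1:ℝ) ≤ (s.1 i : ℝ) := by
    intro i; have := s.2.2 i; exact_mod_cast by omega
  have hA : (∏ i : Fin (a'.length + 1), if (i:ℕ) = 0 then ((s.1 i + n).choose n : ℝ)⁻¹ else 1)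
      = ((s.1 0 + n).choose n : ℝ)⁻¹ := by
    rw [Fin.prod_univ_succ]
    simp
  have hB : ∏ i : Fin (a'.length + 1), (s.1 i : ℝ) ^ (-((x::a').get i : ℤ))
      ≤ ((s.1 0 : ℝ))⁻¹ * ((s.1 0 : ℝ))⁻¹ * ∏ j : Fin a'.length, ((s.1 j.succ : ℝ))⁻¹ := by
    rw [Fin.prod_univ_succ]
    have h0 : ((s.1 0 : ℝ)) ^ (-((x::a').get (0 : Fin (a'.length+1)) : ℤ)) ≤ ((s.1 0:ℝ))⁻¹ * ((s.1 0:ℝ))⁻¹ := by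
      have hg0 : (x::a').get (0 : Fin (a'.length+1)) = x := rfl
      rw [hg0]
      calc ((s.1 0 : ℝ)) ^ (-(x:ℤ)) ≤ ((s.1 0 : ℝ)) ^ (-2:ℤ) :=
            zpow_le_zpow_right₀ (hs1 0) (by omega)
        _ = ((s.1 0:ℝ))⁻¹ * ((s.1 0:ℝ))⁻¹ := by
            rw [zpow_neg, show (2:ℤ) = (2:ℕ) by rfl, zpow_natCast, sq, mul_inv]
    have hrest : ∏ j : Fin a'.length, ((s.1 j.succ : ℝ)) ^ (-((x::a').get j.succ : ℤ))
        ≤ ∏ j : Fin a'.length, ((s.1 j.succ : ℝ))⁻¹ := by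
      apply Finset.prod_le_prod
      · intro j _; positivity
      · intro j _
        have hget : (x::a').get j.succ = a'.get j := rfl
        have hmem : a'.get j ∈ a' := by simpa using a'.get_mem j.1 j.2
        calc ((s.1 j.succ : ℝ)) ^ (-((x::a').get j.succ : ℤ))
            ≤ ((s.1 j.succ : ℝ)) ^ (-1:ℤ) := by
              apply zpow_le_zpow_right₀ (hs1 j.succ)
              have := hpos _ hmem
              rw [hget]
              omega
          _ = ((s.1 j.succ : ℝ))⁻¹ := by rw [zpow_neg, zpow_one]
    calc ((s.1 0 : ℝ)) ^ (-((x::a').get (0 : Fin (a'.length+1)) : ℤ)) *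
          ∏ j : Fin a'.length, ((s.1 j.succ : ℝ)) ^ (-((x::a').get j.succ : ℤ))
        ≤ (((s.1 0:ℝ))⁻¹ * ((s.1 0:ℝ))⁻¹) * ∏ j : Fin a'.length, ((s.1 j.succ : ℝ))⁻¹ := by
          apply mul_le_mul h0 hrest (Finset.prod_nonneg (fun j _ => by positivity)) (by positivity)
      _ = ((s.1 0 : ℝ))⁻¹ * ((s.1 0 : ℝ))⁻¹ * ∏ j : Fin a'.length, ((s.1 j.succ : ℝ))⁻¹ := rfl
  have heq : ((∏ i, gfun n s.1 i : ℕ) : ℝ)⁻¹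
      = ((s.1 0 + n).choose n : ℝ)⁻¹ *
        (((s.1 0 : ℝ))⁻¹ * ((s.1 0 : ℝ))⁻¹ * ∏ j : Fin a'.length, ((s.1 j.succ : ℝ))⁻¹) := by
    rw [prod_gfun]
    push_cast
    rw [Fin.prod_univ_succ]
    rw [mul_inv, mul_inv, mul_inv, ← Finset.prod_inv_distrib]
    ring
  rw [hA, heq]
  apply mul_le_mul_of_nonneg_left hB (by positivity)

end DT


theorem stmt_12 (a : List ℕ) (ha : a ≠ []) (hhead : 2 ≤ a.head ha)
    (hpos : ∀ x ∈ a, 1 ≤ x) (n : ℕ) :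
    dtail a n n ≤ (4 : ℝ) ^ (-(n : ℤ)) * (Real.pi ^ 2 / 6) := by
  cases a with
  | nil => exact absurd rfl ha
  | cons x a' =>
    have hx : 2 ≤ x := hhead
    have hpos' : ∀ y ∈ a', 1 ≤ y := fun y hy => hpos y (List.mem_cons_of_mem x hy)
    rw [dtail, if_neg (by simp)]
    set c : ℝ := (4 : ℝ) ^ (-(n : ℤ)) * (Real.pi ^ 2 / 6) with hc
    have hc0 : 0 ≤ c := by
      have := DT.pisq6_ge_one
      positivity
    apply tsum_le_of_sum_le' hc0
    intro u
    set f : DT.T (a'.length + 1) n → ℝ := fun s =>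
      (∏ i : Fin (a'.length + 1), if (i : ℕ) = 0 then (((s.1 i + n).choose n : ℝ))⁻¹ else 1) *
        ∏ i : Fin (a'.length + 1), (s.1 i : ℝ) ^ (-((x::a').get i : ℤ)) with hf
    have hfnn : ∀ s, 0 ≤ f s := fun s =>
      mul_nonneg (Finset.prod_nonneg fun i _ => by positivity)
        (Finset.prod_nonneg fun i _ => by positivity)
    have h1 : ENNReal.ofReal (∑ s ∈ u, f s) ≤ ENNReal.ofReal c := by
      calc ENNReal.ofReal (∑ s ∈ u, f s)
          = ∑ s ∈ u, ENNReal.ofReal (f s) :=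
            ENNReal.ofReal_sum_of_nonneg (fun s _ => hfnn s)
        _
          ≤ ∑ s ∈ u, ((∏ i, DT.gfun n s.1 i : ℕ) : ℝ≥0∞)⁻¹ := by
            apply Finset.sum_le_sum
            intro s _
            show ENNReal.ofReal (f s)
              ≤ ((∏ i : Fin (a'.length+1), DT.gfun n s.1 i : ℕ) : ℝ≥0∞)⁻¹
            rw [DT.enn_inv_nat _ (DT.prod_gfun_pos n s)]
            exact ENNReal.ofReal_le_ofReal (DT.term_le x a' hx hpos' n s)
        _ ≤ ∑' s : DT.T (a'.length + 1) n, ((∏ i, DT.gfun n s.1 i : ℕ) : ℝ≥0∞)⁻¹ :=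
            ENNReal.sum_le_tsum u
        _ ≤ ENNReal.ofReal c := DT.Pbound' (a'.length + 1) n (by omega)
    exact (ENNReal.ofReal_le_ofReal_iff hc0).1 h1
end

section
/- For an admissible composition a = (a₁,…,a_r), the n-tail ∑_{n₁>⋯>n_r>n} n₁^{-a₁}⋯n_r^{-a_r} is asymptotically equivalent, as n → ∞, to n^{r-(a₁+⋯+a_r)} / ((a₁-1)(a₁+a₂-2)⋯(a₁+⋯+a_r-r)). -/
open Asymptotics Filter

open Finset
open scoped ENNReal NNReal

/-- key pointwise inequality -/
lemma key_ineq (x : ℝ) (hx : 1 ≤ x) (j : ℕ) :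
    ((j : ℝ) + 1) * (((x + 1) ^ (j + 2))⁻¹) ≤ (x ^ (j + 1))⁻¹ - ((x + 1) ^ (j + 1))⁻¹ ∧
    (x ^ (j + 1))⁻¹ - ((x + 1) ^ (j + 1))⁻¹ ≤ ((j : ℝ) + 1) * ((x ^ (j + 2))⁻¹) := by
  have hx0 : (0:ℝ) < x := by linarith
  have hx1 : (0:ℝ) < x + 1 := by linarith
  have hgeom : (x + 1) ^ (j + 1) - x ^ (j + 1)
      = ∑ i ∈ range (j + 1), (x + 1) ^ i * x ^ (j - i) := by
    have h := geom_sum₂_mul (x + 1) x (j + 1)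
    have h2 : x + 1 - x = 1 := by ring
    rw [h2, mul_one] at h
    rw [← h]
    simp only [Nat.add_sub_cancel]
  have hlow : ((j : ℝ) + 1) * x ^ j ≤ (x + 1) ^ (j + 1) - x ^ (j + 1) := by
    rw [hgeom]
    calc ((j : ℝ) + 1) * x ^ j = ∑ _i ∈ range (j + 1), x ^ j := by
          simp [mul_comm]
      _ ≤ _ := by
          refine Finset.sum_le_sum fun i hi => ?_
          simp only [Finset.mem_range] at hi
          have hij : i + (j - i) = j := by omega
          calc x ^ j = x ^ i * x ^ (j - i) := by rw [← pow_add, hij]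
            _ ≤ (x + 1) ^ i * x ^ (j - i) := by
                have := pow_le_pow_left₀ hx0.le (by linarith : x ≤ x + 1) i
                exact mul_le_mul_of_nonneg_right this (by positivity)
  have hhigh : (x + 1) ^ (j + 1) - x ^ (j + 1) ≤ ((j : ℝ) + 1) * (x + 1) ^ j := by
    rw [hgeom]
    calc ∑ i ∈ range (j + 1), (x + 1) ^ i * x ^ (j - i)
        ≤ ∑ _i ∈ range (j + 1), (x + 1) ^ j := by
          refine Finset.sum_le_sum fun i hi => ?_
          simp only [Finset.mem_range] at hi
          have hij : i + (j - i) = j := by omega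
          calc (x + 1) ^ i * x ^ (j - i) ≤ (x + 1) ^ i * (x + 1) ^ (j - i) := by
                have := pow_le_pow_left₀ hx0.le (by linarith : x ≤ x + 1) (j - i)
                exact mul_le_mul_of_nonneg_left this (by positivity)
            _ = (x + 1) ^ j := by rw [← pow_add, hij]
      _ = ((j : ℝ) + 1) * (x + 1) ^ j := by simp [mul_comm]
  have hdiff : (x ^ (j + 1))⁻¹ - ((x + 1) ^ (j + 1))⁻¹
      = ((x + 1) ^ (j + 1) - x ^ (j + 1)) / (x ^ (j + 1) * (x + 1) ^ (j + 1)) := by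
    rw [inv_sub_inv (by positivity) (by positivity)]
  have e1 : x ^ (j + 2) = x ^ (j + 1) * x := pow_succ x (j + 1)
  have e2 : (x + 1) ^ (j + 2) = (x + 1) ^ (j + 1) * (x + 1) := pow_succ (x + 1) (j + 1)
  have e3 : x ^ (j + 1) = x ^ j * x := pow_succ x j
  have e4 : (x + 1) ^ (j + 1) = (x + 1) ^ j * (x + 1) := pow_succ (x + 1) j
  have P1 : (0:ℝ) ≤ ((j:ℝ) + 1) * x ^ j * (x + 1) ^ (j + 1) := by positivity
  have P2 : (0:ℝ) ≤ ((j:ℝ) + 1) * (x + 1) ^ j * x ^ (j + 1) := by positivity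
  constructor
  · rw [hdiff]
    have step1 : ((j : ℝ) + 1) * (((x + 1) ^ (j + 2))⁻¹)
        ≤ (((j : ℝ) + 1) * x ^ j) / (x ^ (j + 1) * (x + 1) ^ (j + 1)) := by
      rw [← div_eq_mul_inv, div_le_div_iff₀ (by positivity) (by positivity), e3, e2]
      nlinarith [P1]
    exact step1.trans (div_le_div_of_nonneg_right hlow (by positivity))
  · rw [hdiff]
    have step1 : ((x + 1) ^ (j + 1) - x ^ (j + 1)) / (x ^ (j + 1) * (x + 1) ^ (j + 1))
        ≤ (((j : ℝ) + 1) * (x + 1) ^ j) / (x ^ (j + 1) * (x + 1) ^ (j + 1)) :=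
      div_le_div_of_nonneg_right hhigh (by positivity)
    refine step1.trans ?_
    rw [← div_eq_mul_inv, div_le_div_iff₀ (by positivity) (by positivity), e4, e1]
    nlinarith [P2]

/-- tail sum of `c` beyond `n` -/
noncomputable def Tl (c : ℕ → ℝ) (n : ℕ) : ℝ := ∑' i : ℕ, c (n + i + 1)

lemma summable_gp {p : ℕ} (hp : 2 ≤ p) : Summable (fun k : ℕ => ((k : ℝ) ^ p)⁻¹) := by
  simpa [one_div] using Real.summable_one_div_nat_pow.mpr hp

lemma summable_shift (c : ℕ → ℝ) (hc : Summable c) (n : ℕ) :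
    Summable (fun i : ℕ => c (n + i + 1)) := by
  have := (summable_nat_add_iff (f := c) (n + 1)).mpr hc
  exact this.congr fun i => by congr 1; omega

lemma hasSum_telescope (q n : ℕ) (hq : 1 ≤ q) (hn : 1 ≤ n) :
    HasSum (fun i : ℕ => (((n + i : ℕ) : ℝ) ^ q)⁻¹ - (((n + i + 1 : ℕ) : ℝ) ^ q)⁻¹)
      (((n : ℝ) ^ q)⁻¹) := by
  set f : ℕ → ℝ := fun k => (((k : ℕ) : ℝ) ^ q)⁻¹ with hf
  have hanti : ∀ i : ℕ, f (n + i + 1) ≤ f (n + i) := by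
    intro i
    have h1 : (1 : ℝ) ≤ ((n + i : ℕ) : ℝ) := by exact_mod_cast Nat.one_le_iff_ne_zero.mpr (by omega)
    have h2 : ((n + i : ℕ) : ℝ) ≤ ((n + i + 1 : ℕ) : ℝ) := by push_cast; linarith
    exact inv_anti₀ (by positivity) (pow_le_pow_left₀ (by linarith) h2 q)
  rw [hasSum_iff_tendsto_nat_of_nonneg (fun i => by linarith [hanti i])]
  have hps : ∀ N : ℕ, ∑ i ∈ range N, (f (n + i) - f (n + i + 1)) = f n - f (n + N) := by
    intro N
    exact Finset.sum_range_sub' (fun i => f (n + i)) N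
  have hps' : ∀ N : ℕ, ∑ i ∈ range N, ((((n + i : ℕ) : ℝ) ^ q)⁻¹ - (((n + i + 1 : ℕ) : ℝ) ^ q)⁻¹) = f n - f (n + N) := hps
  simp only [hps']
  have hlim : Tendsto (fun N : ℕ => f (n + N)) atTop (nhds 0) := by
    have h1 : Tendsto (fun N : ℕ => ((n + N : ℕ) : ℝ)) atTop atTop := by
      apply tendsto_natCast_atTop_atTop.comp
      exact tendsto_atTop_mono (fun N => Nat.le_add_left N n) tendsto_id
    have h2 : Tendsto (fun N : ℕ => ((n + N : ℕ) : ℝ) ^ q) atTop atTop :=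
      (tendsto_pow_atTop (by omega)).comp h1
    exact tendsto_inv_atTop_zero.comp h2
  have : Tendsto (fun N : ℕ => f n - f (n + N)) atTop (nhds (f n - 0)) :=
    tendsto_const_nhds.sub hlim
  simpa using this

lemma tail_upper (j n : ℕ) (hn : 1 ≤ n) :
    ((j : ℝ) + 1) * Tl (fun k => ((k : ℝ) ^ (j + 2))⁻¹) n ≤ (((n : ℝ) ^ (j + 1))⁻¹) := by
  have hkey : ∀ i : ℕ, ((j : ℝ) + 1) * (((n + i + 1 : ℕ) : ℝ) ^ (j + 2))⁻¹
      ≤ (((n + i : ℕ) : ℝ) ^ (j + 1))⁻¹ - (((n + i + 1 : ℕ) : ℝ) ^ (j + 1))⁻¹ := by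
    intro i
    have h1 : (1 : ℝ) ≤ ((n + i : ℕ) : ℝ) := by exact_mod_cast Nat.one_le_iff_ne_zero.mpr (by omega)
    have hcast : ((n + i + 1 : ℕ) : ℝ) = ((n + i : ℕ) : ℝ) + 1 := by push_cast; ring
    rw [hcast]
    exact (key_ineq _ h1 j).1
  have hsum1 : Summable (fun i : ℕ => ((j : ℝ) + 1) * (((n + i + 1 : ℕ) : ℝ) ^ (j + 2))⁻¹) :=
    (summable_shift _ (summable_gp (by omega)) n).mul_left _
  have hsum2 := (hasSum_telescope (j + 1) n (by omega) hn).summable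
  have := Summable.tsum_le_tsum hkey hsum1 hsum2
  rw [tsum_mul_left, (hasSum_telescope (j + 1) n (by omega) hn).tsum_eq] at this
  exact this

lemma tail_lower (j n : ℕ) (hn : 1 ≤ n) :
    (((n : ℝ) ^ (j + 1))⁻¹) - ((j : ℝ) + 1) * (((n : ℝ) ^ (j + 2))⁻¹)
      ≤ ((j : ℝ) + 1) * Tl (fun k => ((k : ℝ) ^ (j + 2))⁻¹) n := by
  have hkey : ∀ i : ℕ, (((n + i : ℕ) : ℝ) ^ (j + 1))⁻¹ - (((n + i + 1 : ℕ) : ℝ) ^ (j + 1))⁻¹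
      ≤ ((j : ℝ) + 1) * (((n + i : ℕ) : ℝ) ^ (j + 2))⁻¹ := by
    intro i
    have h1 : (1 : ℝ) ≤ ((n + i : ℕ) : ℝ) := by exact_mod_cast Nat.one_le_iff_ne_zero.mpr (by omega)
    have hcast : ((n + i + 1 : ℕ) : ℝ) = ((n + i : ℕ) : ℝ) + 1 := by push_cast; ring
    rw [hcast]
    exact (key_ineq _ h1 j).2
  have hsum2 : Summable (fun i : ℕ => ((j : ℝ) + 1) * (((n + i : ℕ) : ℝ) ^ (j + 2))⁻¹) := by
    refine Summable.mul_left _ ?_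
    have := (summable_nat_add_iff (f := fun k : ℕ => ((k : ℝ) ^ (j + 2))⁻¹) n).mpr
      (summable_gp (by omega))
    exact this.congr fun i => by norm_num [add_comm]
  have hsum1 := (hasSum_telescope (j + 1) n (by omega) hn).summable
  have h := Summable.tsum_le_tsum hkey hsum1 hsum2
  rw [(hasSum_telescope (j + 1) n (by omega) hn).tsum_eq, tsum_mul_left] at h
  -- now h : (n^(j+1))⁻¹ ≤ (j+1) * ∑' i, ((n+i)^(j+2))⁻¹
  have hsplit : ∑' i : ℕ, (((n + i : ℕ) : ℝ) ^ (j + 2))⁻¹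
      = (((n : ℝ) ^ (j + 2))⁻¹) + Tl (fun k => ((k : ℝ) ^ (j + 2))⁻¹) n := by
    have hs : Summable (fun i : ℕ => (((n + i : ℕ) : ℝ) ^ (j + 2))⁻¹) := by
      have := (summable_nat_add_iff (f := fun k : ℕ => ((k : ℝ) ^ (j + 2))⁻¹) n).mpr
        (summable_gp (by omega))
      exact this.congr fun i => by norm_num [add_comm]
    rw [Summable.tsum_eq_zero_add hs]
    simp only [Tl]
    norm_num
    exact tsum_congr fun i => by ring_nf
  rw [hsplit, mul_add] at h
  linarith

lemma Tl_nonneg (c : ℕ → ℝ) (hc : ∀ k, 0 ≤ c k) (n : ℕ) : 0 ≤ Tl c n :=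
  tsum_nonneg fun i => hc _

lemma gp_split (j n : ℕ) : ((n : ℝ) ^ (j + 2))⁻¹ = ((n : ℝ) ^ (j + 1))⁻¹ * ((n : ℝ))⁻¹ := by
  rw [pow_succ, mul_inv]

lemma tailA (j : ℕ) :
    (fun n : ℕ => Tl (fun k => ((k : ℝ) ^ (j + 2))⁻¹) n) ~[atTop]
      (fun n : ℕ => (((n : ℝ) ^ (j + 1))⁻¹) / ((j : ℝ) + 1)) := by
  rw [IsEquivalent, isLittleO_iff]
  intro ε hε
  have hev : ∀ᶠ n : ℕ in atTop, ((j : ℝ) + 1) / (n : ℝ) ≤ ε := by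
    have : Tendsto (fun n : ℕ => ((j : ℝ) + 1) / (n : ℝ)) atTop (nhds 0) :=
      tendsto_const_nhds.div_atTop tendsto_natCast_atTop_atTop
    exact this.eventually_le_const hε
  filter_upwards [eventually_ge_atTop 1, hev] with n hn hn'
  have hn1 : (1 : ℝ) ≤ (n : ℝ) := by exact_mod_cast hn
  have hjp : (0 : ℝ) < (j : ℝ) + 1 := by positivity
  have hup := tail_upper j n hn
  have hlo := tail_lower j n hn
  set T := Tl (fun k => ((k : ℝ) ^ (j + 2))⁻¹) n with hT
  set L := (((n : ℝ) ^ (j + 1))⁻¹) / ((j : ℝ) + 1) with hL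
  have hupper : T ≤ L := by
    rw [hL, le_div_iff₀ hjp]; linarith [hup]
  have hlower : L - ((n : ℝ) ^ (j + 2))⁻¹ ≤ T := by
    rw [hL, sub_le_iff_le_add, div_le_iff₀ hjp]
    nlinarith [hlo]
  have hLnn : 0 ≤ L := by rw [hL]; positivity
  have habs : ‖T - L‖ ≤ ((n : ℝ) ^ (j + 2))⁻¹ := by
    rw [Real.norm_eq_abs, abs_le]
    constructor <;> [linarith; linarith [inv_nonneg.mpr (by positivity : (0:ℝ) ≤ (n:ℝ)^(j+2))]]
  refine habs.trans ?_
  have : ((n : ℝ) ^ (j + 2))⁻¹ = (((j : ℝ) + 1) / (n : ℝ)) * L := by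
    rw [hL, gp_split]; field_simp
  rw [this, Real.norm_eq_abs, abs_of_nonneg hLnn]
  exact mul_le_mul_of_nonneg_right hn' hLnn

lemma tailB (c : ℕ → ℝ) (hc : ∀ k, 0 ≤ c k) (j : ℕ) (C : ℝ) (hC : 0 < C)
    (h : (fun k : ℕ => c k) ~[atTop] (fun k => C * ((k : ℝ) ^ (j + 2))⁻¹)) :
    (fun n : ℕ => Tl c n) ~[atTop]
      (fun n : ℕ => C * ((((n : ℝ) ^ (j + 1))⁻¹) / ((j : ℝ) + 1))) := by
  have hg := summable_gp (p := j + 2) (by omega)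
  have hsc : Summable c := summable_of_isBigO_nat (hg.mul_left C) h.isBigO
  set g : ℕ → ℝ := fun k => ((k : ℝ) ^ (j + 2))⁻¹ with hgdef
  have hgnn : ∀ k, 0 ≤ g k := fun k => by positivity
  have key : (fun n : ℕ => Tl c n) ~[atTop] (fun n : ℕ => C * Tl g n) := by
    rw [IsEquivalent, isLittleO_iff]
    intro ε hε
    obtain ⟨K, hK⟩ := eventually_atTop.mp (isLittleO_iff.mp h.isLittleO hε)
    filter_upwards [eventually_ge_atTop K] with n hn
    have hsg := summable_shift g (hg.congr fun k => rfl) n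
    have hscn := summable_shift c hsc n
    have hdiff : Tl c n - C * Tl g n = ∑' i : ℕ, (c (n + i + 1) - C * g (n + i + 1)) := by
      rw [Summable.tsum_sub hscn (hsg.mul_left C), tsum_mul_left]
      rfl
    have habs : ‖Tl c n - C * Tl g n‖ ≤ ∑' i : ℕ, ‖c (n + i + 1) - C * g (n + i + 1)‖ := by
      rw [hdiff]
      exact norm_tsum_le_tsum_norm (hscn.sub (hsg.mul_left C)).norm
    have hterm : ∀ i : ℕ, ‖c (n + i + 1) - C * g (n + i + 1)‖ ≤ ε * (C * g (n + i + 1)) := by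
      intro i
      have := hK (n + i + 1) (by omega)
      calc ‖c (n + i + 1) - C * g (n + i + 1)‖ ≤ ε * ‖C * g (n + i + 1)‖ := this
        _ = ε * (C * g (n + i + 1)) := by
            rw [Real.norm_eq_abs, abs_of_nonneg (by positivity)]
    have hsum : ∑' i : ℕ, ‖c (n + i + 1) - C * g (n + i + 1)‖ ≤ ε * (C * Tl g n) := by
      have := Summable.tsum_le_tsum hterm ((hscn.sub (hsg.mul_left C)).norm)
        (((hsg.mul_left C).mul_left ε))
      rw [tsum_mul_left, tsum_mul_left] at this
      exact this
    have hTg : 0 ≤ Tl g n := Tl_nonneg g hgnn n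
    exact (habs.trans hsum).trans_eq
      (by rw [Real.norm_eq_abs, abs_of_nonneg (mul_nonneg hC.le hTg)])
  have H2 := (IsEquivalent.refl (u := fun _ : ℕ => C) (l := atTop)).mul (tailA j)
  exact key.trans H2

open scoped ENNReal NNReal

/-- strictly monotone tuples with entries `> n` -/
def SM (r n : ℕ) := {t : Fin r → ℕ // StrictMono t ∧ ∀ i, n < t i}

noncomputable def W : List ℕ → ℕ → ℝ≥0∞
  | [], _ => 1
  | b :: l, n => ∑' k : {k : ℕ // n < k}, W l k * (((k : ℕ) : ℝ≥0∞) ^ b)⁻¹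

/-- the shift equivalence -/
def shiftEquiv' (n : ℕ) : ℕ ≃ {k : ℕ // n < k} where
  toFun i := ⟨n + i + 1, by omega⟩
  invFun k := k.1 - n - 1
  left_inv i := by show n + i + 1 - n - 1 = i; omega
  right_inv k := by
    rcases k with ⟨k, hk⟩
    simp only [Subtype.mk.injEq]
    omega

instance (n : ℕ) : Unique (SM 0 n) := by
  refine ⟨⟨⟨Fin.elim0, ?_, ?_⟩⟩, ?_⟩
  · intro i; exact i.elim0
  · intro i; exact i.elim0
  · rintro ⟨t, _⟩
    refine Subtype.ext (funext fun i => i.elim0)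

lemma strictMono_cons {r k : ℕ} {u : Fin r → ℕ} (hu : StrictMono u) (hk : ∀ i, k < u i) :
    StrictMono (Fin.cons k u : Fin (r + 1) → ℕ) := by
  intro i j h
  induction i using Fin.cases with
  | zero =>
    induction j using Fin.cases with
    | zero => exact absurd h (lt_irrefl _)
    | succ j' => simpa using hk j'
  | succ i' =>
    induction j using Fin.cases with
    | zero => exact absurd h (by simp)
    | succ j' => simpa using hu (by simpa using h)

/-- peel the smallest element off a strictly monotone tuple -/
def consEquiv (r n : ℕ) :
    SM (r + 1) n ≃ Σ k : {k : ℕ // n < k}, SM r k where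
  toFun t :=
    ⟨⟨t.1 0, t.2.2 0⟩, ⟨fun i => t.1 i.succ,
      fun i j h => t.2.1 (by simpa using h),
      fun i => t.2.1 (Fin.succ_pos i)⟩⟩
  invFun p :=
    ⟨Fin.cons p.1.1 p.2.1, strictMono_cons p.2.2.1 p.2.2.2, by
      intro i
      induction i using Fin.cases with
      | zero => simpa using p.1.2
      | succ i' => simpa using lt_trans p.1.2 (p.2.2.2 i')⟩
  left_inv t := by
    refine Subtype.ext (funext fun i => ?_)
    refine Fin.cases ?_ (fun i' => ?_) i <;> simp
  right_inv p := by
    rcases p with ⟨k, u⟩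
    refine Sigma.ext ?_ ?_
    · simp [Subtype.ext_iff]
    · simp only []
      refine heq_of_eq (Subtype.ext (funext fun i => ?_))
      simp


set_option maxHeartbeats 800000 in
lemma M_eq_W (m : List ℕ) : ∀ n : ℕ,
    (∑' t : SM m.length n, ∏ i : Fin m.length, (((t.1 i : ℕ) : ℝ≥0∞) ^ (m.get i))⁻¹)
      = W m n := by
  induction m with
  | nil =>
    intro n
    have t0 : SM ([] : List ℕ).length n := ⟨fun i => i.elim0, fun i _ _ => i.elim0, fun i => i.elim0⟩
    rw [tsum_eq_single t0 (fun b hb => absurd (Subtype.ext (funext fun i => i.elim0)) hb)]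
    rw [show W [] n = 1 from rfl]
    exact Finset.prod_eq_one fun i _ => i.elim0
  | cons b l ih =>
    intro n
    rw [show W (b :: l) n = ∑' k : {k : ℕ // n < k}, W l k * (((k : ℕ) : ℝ≥0∞) ^ b)⁻¹ from rfl]
    show (∑' t : SM (l.length + 1) n,
        ∏ i : Fin (l.length + 1), (((t.1 i : ℕ) : ℝ≥0∞) ^ ((b :: l).get i))⁻¹) = _
    rw [← ((consEquiv l.length n).symm.tsum_eq
      (fun t : SM (l.length + 1) n =>
        ∏ i : Fin (l.length + 1), (((t.1 i : ℕ) : ℝ≥0∞) ^ ((b :: l).get i))⁻¹))]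
    rw [ENNReal.tsum_sigma']
    refine tsum_congr fun k => ?_
    rw [← ih (k : ℕ), ← ENNReal.tsum_mul_right]
    refine tsum_congr fun u => ?_
    show (∏ i : Fin (l.length + 1),
        ((((Fin.cons (k : ℕ) u.1 : Fin (l.length + 1) → ℕ) i : ℕ) : ℝ≥0∞) ^ ((b :: l).get i))⁻¹)
        = _
    rw [Fin.prod_univ_succ]
    simp [mul_comm]

lemma anti_eq_M (a : List ℕ) (n : ℕ) :
    (∑' s : {s : Fin a.length → ℕ // StrictAnti s ∧ ∀ i, n < s i},
        ∏ i : Fin a.length, (((s.1 i : ℕ) : ℝ≥0∞) ^ (a.get i))⁻¹)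
      = ∑' t : SM a.reverse.length n,
          ∏ i : Fin a.reverse.length, (((t.1 i : ℕ) : ℝ≥0∞) ^ (a.reverse.get i))⁻¹ := by
  have h : a.reverse.length = a.length := a.length_reverse
  set φ : Fin a.length ≃ Fin a.reverse.length :=
    Fin.revPerm.trans (finCongr h.symm) with hφ
  have hφval : ∀ i : Fin a.length, ((φ i : ℕ)) = a.length - 1 - (i : ℕ) := by
    intro i; simp [hφ, Fin.rev]; omega
  have hφsval : ∀ i' : Fin a.reverse.length, ((φ.symm i' : ℕ)) = a.length - 1 - (i' : ℕ) := by
    intro i'; simp [hφ, Fin.rev]; omega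
  have hφlt : ∀ i j : Fin a.length, i < j → φ j < φ i := by
    intro i j hij
    rw [Fin.lt_def, hφval, hφval]
    have := j.isLt
    rw [Fin.lt_def] at hij
    omega
  have hφslt : ∀ i' j' : Fin a.reverse.length, i' < j' → φ.symm j' < φ.symm i' := by
    intro i' j' hij
    rw [Fin.lt_def, hφsval, hφsval]
    have h1 := j'.isLt
    rw [Fin.lt_def] at hij
    omega
  have hget : ∀ i : Fin a.length, a.reverse.get (φ i) = a.get i := by
    intro i
    rw [List.get_eq_getElem, List.get_eq_getElem, List.getElem_reverse]
    congr 1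
    rw [hφval i]
    have := i.isLt
    omega
  set E : SM a.reverse.length n ≃ {s : Fin a.length → ℕ // StrictAnti s ∧ ∀ i, n < s i} :=
    { toFun := fun t => ⟨fun i => t.1 (φ i),
        fun i j hij => t.2.1 (hφlt i j hij), fun i => t.2.2 _⟩
      invFun := fun s => ⟨fun i' => s.1 (φ.symm i'),
        fun i' j' hij => s.2.1 (hφslt i' j' hij), fun i' => s.2.2 _⟩
      left_inv := fun t => Subtype.ext (funext fun i' => by simp)
      right_inv := fun s => Subtype.ext (funext fun i => by simp) } with hE
  rw [← E.tsum_eq]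
  refine tsum_congr fun t => ?_
  have := Equiv.prod_comp φ
    (fun i' : Fin a.reverse.length => (((t.1 i' : ℕ) : ℝ≥0∞) ^ (a.reverse.get i'))⁻¹)
  rw [← this]
  refine Finset.prod_congr rfl fun i _ => ?_
  rw [hget i]
  rfl

lemma tsum_subtype_shift (f : ℕ → ℝ≥0∞) (n : ℕ) :
    (∑' k : {k : ℕ // n < k}, f k) = ∑' i : ℕ, f (n + i + 1) :=
  ((shiftEquiv' n).tsum_eq (fun k : {k : ℕ // n < k} => f (k : ℕ))).symm

lemma ofReal_inv_pow (p k : ℕ) (hk : 1 ≤ k) :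
    ENNReal.ofReal (((k : ℝ) ^ p)⁻¹) = (((k : ℕ) : ℝ≥0∞) ^ p)⁻¹ := by
  have hk' : (0 : ℝ) < (k : ℝ) := by exact_mod_cast hk
  rw [ENNReal.ofReal_inv_of_pos (by positivity), ENNReal.ofReal_pow (by positivity),
    ENNReal.ofReal_natCast]

lemma tsum_pow_inv_eq (p n : ℕ) (hp : 2 ≤ p) :
    (∑' k : {k : ℕ // n < k}, (((k : ℕ) : ℝ≥0∞) ^ p)⁻¹)
      = ENNReal.ofReal (Tl (fun k => ((k : ℝ) ^ p)⁻¹) n) := by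
  rw [tsum_subtype_shift (fun k => (((k : ℕ) : ℝ≥0∞) ^ p)⁻¹) n]
  rw [show Tl (fun k => ((k : ℝ) ^ p)⁻¹) n = ∑' i : ℕ, (((n + i + 1 : ℕ) : ℝ) ^ p)⁻¹ from rfl]
  rw [ENNReal.ofReal_tsum_of_nonneg (fun i => by positivity)
    (summable_shift _ (summable_gp hp) n)]
  exact tsum_congr fun i => (ofReal_inv_pow p (n + i + 1) (by omega)).symm

noncomputable def Dc : List ℕ → ℝ
  | [] => 1
  | b :: l => (((b :: l).sum : ℝ) - ((b :: l).length : ℝ)) * Dc l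

lemma main (m : List ℕ) (hadm : ∀ t, t <:+ m → t ≠ [] → t.length + 1 ≤ t.sum) :
    (∀ n : ℕ, W m n ≠ ∞) ∧
    (∃ C : ℝ≥0, ∀ k : ℕ, 1 ≤ k → W m k ≤ C * (((k : ℕ) : ℝ≥0∞) ^ (m.sum - m.length))⁻¹) ∧
    (0 < Dc m) ∧
    ((fun n : ℕ => (W m n).toReal) ~[atTop]
      (fun n : ℕ => (((n : ℝ) ^ (m.sum - m.length))⁻¹) / Dc m)) := by
  induction m with
  | nil =>
    refine ⟨fun n => by simp [W], ⟨1, fun k hk => by simp [W]⟩,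
      by rw [show Dc [] = 1 from rfl]; exact one_pos, ?_⟩
    refine Filter.EventuallyEq.isEquivalent ?_
    refine Eventually.of_forall fun n => ?_
    show (W [] n).toReal = ((n : ℝ) ^ (([] : List ℕ).sum - ([] : List ℕ).length))⁻¹ / Dc []
    rw [show W [] n = 1 from rfl, show Dc [] = 1 from rfl]
    simp
  | cons b l ih =>
    have hsuf : ∀ t, t <:+ l → t ≠ [] → t.length + 1 ≤ t.sum := fun t ht =>
      hadm t (ht.trans (List.suffix_cons b l))
    obtain ⟨hfin, ⟨C, hC⟩, hD, heq⟩ := ih hsuf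
    have hm : (b :: l).length + 1 ≤ (b :: l).sum := hadm (b :: l) (List.suffix_refl _) (by simp)
    have hm' : l.length + 2 ≤ b + l.sum := by simp [List.sum_cons] at hm; omega
    have hls : l.length ≤ l.sum := by
      rcases eq_or_ne l [] with rfl | hl
      · simp
      · have := hsuf l (List.suffix_refl l) hl; omega
    set e := l.sum - l.length with he
    set j := b + l.sum - l.length - 2 with hj
    have hj2 : e + b = j + 2 := by omega
    have hem : (b :: l).sum - (b :: l).length = j + 1 := by
      simp only [List.sum_cons, List.length_cons]; omega
    have hkne : ∀ k : ℕ, 1 ≤ k → (((k : ℕ) : ℝ≥0∞)) ≠ 0 := by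
      intro k hk; exact Nat.cast_ne_zero.mpr (by omega)
    -- termwise bound
    have hterm : ∀ (n : ℕ) (k : {k : ℕ // n < k}),
        W l k * (((k : ℕ) : ℝ≥0∞) ^ b)⁻¹ ≤ C * (((k : ℕ) : ℝ≥0∞) ^ (j + 2))⁻¹ := by
      intro n k
      have hk1 : 1 ≤ (k : ℕ) := by have := k.2; omega
      have h1 : W l k ≤ C * (((k : ℕ) : ℝ≥0∞) ^ e)⁻¹ := hC k hk1
      calc W l k * (((k : ℕ) : ℝ≥0∞) ^ b)⁻¹
          ≤ (C * (((k : ℕ) : ℝ≥0∞) ^ e)⁻¹) * ((((k : ℕ) : ℝ≥0∞)) ^ b)⁻¹ :=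
            mul_le_mul_left h1 _
        _ = C * ((((k : ℕ) : ℝ≥0∞)) ^ (j + 2))⁻¹ := by
            rw [mul_assoc, ← ENNReal.mul_inv (Or.inl (pow_ne_zero e (hkne _ hk1)))
              (Or.inl (ENNReal.pow_ne_top (ENNReal.natCast_ne_top _))), ← pow_add, hj2]
    have hWle : ∀ n : ℕ, W (b :: l) n
        ≤ C * ENNReal.ofReal (Tl (fun k => ((k : ℝ) ^ (j + 2))⁻¹) n) := by
      intro n
      rw [show W (b :: l) n = ∑' k : {k : ℕ // n < k}, W l k * (((k : ℕ) : ℝ≥0∞) ^ b)⁻¹ from rfl]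
      calc (∑' k : {k : ℕ // n < k}, W l k * (((k : ℕ) : ℝ≥0∞) ^ b)⁻¹)
          ≤ ∑' k : {k : ℕ // n < k}, (C : ℝ≥0∞) * ((((k : ℕ) : ℝ≥0∞)) ^ (j + 2))⁻¹ :=
            ENNReal.tsum_le_tsum (hterm n)
        _ = C * ∑' k : {k : ℕ // n < k}, ((((k : ℕ) : ℝ≥0∞)) ^ (j + 2))⁻¹ :=
            ENNReal.tsum_mul_left
        _ = C * ENNReal.ofReal (Tl (fun k => ((k : ℝ) ^ (j + 2))⁻¹) n) := by
            rw [tsum_pow_inv_eq (j + 2) n (by omega)]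
    have hfin' : ∀ n : ℕ, W (b :: l) n ≠ ∞ := by
      intro n
      exact ((hWle n).trans_lt (ENNReal.mul_lt_top ENNReal.coe_lt_top ENNReal.ofReal_lt_top)).ne
    have hcastsum : ((b :: l).sum : ℝ) - ((b :: l).length : ℝ) = (j : ℝ) + 1 := by
      have h4 : (b :: l).sum = (b :: l).length + (j + 1) := by
        simp only [List.sum_cons, List.length_cons]; omega
      rw [h4]; push_cast; ring
    refine ⟨hfin', ⟨C, ?_⟩, ?_, ?_⟩
    · -- pointwise bound
      intro k hk
      refine (hWle k).trans ?_
      rw [hem]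
      have h1 : Tl (fun k => ((k : ℝ) ^ (j + 2))⁻¹) k ≤ ((k : ℝ) ^ (j + 1))⁻¹ := by
        have h2 := tail_upper j k hk
        have h3 := Tl_nonneg (fun k => ((k : ℝ) ^ (j + 2))⁻¹) (fun k => by positivity) k
        nlinarith [h2, h3]
      refine mul_le_mul_right ?_ _
      refine (ENNReal.ofReal_le_ofReal h1).trans ?_
      rw [ofReal_inv_pow (j + 1) k hk]
    · -- positivity of Dc
      rw [show Dc (b :: l) = (((b :: l).sum : ℝ) - ((b :: l).length : ℝ)) * Dc l from rfl,
        hcastsum]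
      positivity
    · -- asymptotics
      set c : ℕ → ℝ := fun k => (W l k * (((k : ℕ) : ℝ≥0∞) ^ b)⁻¹).toReal with hcdef
      have hWtoReal : ∀ n : ℕ, (W (b :: l) n).toReal = Tl c n := by
        intro n
        rw [show W (b :: l) n = ∑' k : {k : ℕ // n < k}, W l k * (((k : ℕ) : ℝ≥0∞) ^ b)⁻¹ from rfl,
          tsum_subtype_shift (fun k => W l k * (((k : ℕ) : ℝ≥0∞) ^ b)⁻¹) n,
          ENNReal.tsum_toReal_eq]
        · rfl
        · intro i
          exact ENNReal.mul_ne_top (hfin _)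
            (ENNReal.inv_ne_top.mpr (pow_ne_zero b (hkne _ (by omega))))
      have hcnn : ∀ k, 0 ≤ c k := fun k => ENNReal.toReal_nonneg
      have hceq : ∀ k : ℕ, c k = (W l k).toReal * (((k : ℝ)) ^ b)⁻¹ := by
        intro k
        rw [hcdef]
        simp only [ENNReal.toReal_mul, ENNReal.toReal_inv, ENNReal.toReal_pow,
          ENNReal.toReal_natCast]
      have hc_equiv : (fun k : ℕ => c k) ~[atTop]
          (fun k : ℕ => (1 / Dc l) * ((k : ℝ) ^ (j + 2))⁻¹) := by
        have h1 := heq.mul (IsEquivalent.refl (u := fun k : ℕ => (((k : ℝ)) ^ b)⁻¹) (l := atTop))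
        have h2 : (fun k : ℕ => c k)
            = fun k : ℕ => (W l k).toReal * (((k : ℝ)) ^ b)⁻¹ := funext hceq
        have h3 : (fun k : ℕ => (((k : ℝ) ^ e)⁻¹ / Dc l) * (((k : ℝ)) ^ b)⁻¹)
            = fun k : ℕ => (1 / Dc l) * ((k : ℝ) ^ (j + 2))⁻¹ := by
          funext k
          rw [← hj2, pow_add, mul_inv]
          ring
        rw [h2]
        refine IsEquivalent.trans ?_
          (Filter.EventuallyEq.isEquivalent (Eventually.of_forall fun k => congrFun h3 k))
        exact h1
      have happ := tailB c hcnn j (1 / Dc l) (by positivity) hc_equiv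
      rw [hem]
      have hgoalL : (fun n : ℕ => (W (b :: l) n).toReal) = fun n => Tl c n := funext hWtoReal
      rw [hgoalL]
      refine happ.trans (Filter.EventuallyEq.isEquivalent (Eventually.of_forall fun n => ?_))
      rw [show Dc (b :: l) = (((b :: l).sum : ℝ) - ((b :: l).length : ℝ)) * Dc l from rfl,
        hcastsum]
      have hjne : ((j : ℝ) + 1) ≠ 0 := by positivity
      field_simp

lemma dtail_eq_W (a : List ℕ) (ha : a ≠ []) (n : ℕ) :
    dtail a 0 n = (W a.reverse n).toReal := by
  rw [dtail, if_neg (by simpa [List.isEmpty_iff] using ha)]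
  rw [← M_eq_W a.reverse n, ← anti_eq_M a n]
  rw [ENNReal.tsum_toReal_eq (fun s => ?_)]
  swap
  · refine (ENNReal.prod_lt_top fun i _ => ?_).ne
    have h0 : 0 < (s.1 i : ℕ) := lt_of_le_of_lt (Nat.zero_le n) (s.2.2 i)
    have h1 : ((s.1 i : ℕ) : ℝ≥0∞) ≠ 0 := by exact_mod_cast h0.ne'
    simp only [ENNReal.inv_lt_top]
    exact pos_iff_ne_zero.mpr (pow_ne_zero _ h1)
  refine tsum_congr fun s => ?_
  rw [ENNReal.toReal_prod]
  have h1 : (∏ i : Fin a.length,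
      if (i : ℕ) = 0 then (((s.1 i + 0).choose 0 : ℝ))⁻¹ else 1) = 1 := by
    refine Finset.prod_eq_one fun i _ => ?_
    split <;> simp
  rw [h1, one_mul]
  refine Finset.prod_congr rfl fun i _ => ?_
  rw [ENNReal.toReal_inv, ENNReal.toReal_pow, ENNReal.toReal_natCast, zpow_neg, zpow_natCast]

lemma length_le_sum (l : List ℕ) (h : ∀ x ∈ l, 1 ≤ x) : l.length ≤ l.sum := by
  induction l with
  | nil => simp
  | cons x t ih =>
    simp only [List.length_cons, List.sum_cons]
    have h1 := h x (by simp)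
    have h2 := ih fun y hy => h y (by simp [hy])
    omega

lemma adm_reverse (a : List ℕ) (ha : a ≠ []) (hhead : 2 ≤ a.head ha)
    (hpos : ∀ x ∈ a, 1 ≤ x) :
    ∀ t, t <:+ a.reverse → t ≠ [] → t.length + 1 ≤ t.sum := by
  intro t ht htne
  have hpre : t.reverse <+: a := by
    rw [← a.reverse_reverse]
    exact List.reverse_prefix.mpr ht
  obtain ⟨u, hu⟩ := hpre
  cases hrev : t.reverse with
  | nil => exact absurd (by simpa using congrArg List.reverse hrev) htne
  | cons x rest =>
    rw [hrev] at hu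
    subst hu
    simp only [List.cons_append, List.head_cons] at hhead
    have hsum : t.sum = x + rest.sum := by
      rw [← t.reverse_reverse, hrev]
      simp [Nat.add_comm, List.sum_reverse]
    have hlen : t.length = rest.length + 1 := by
      rw [← t.reverse_reverse, hrev]
      simp
    have hrest : rest.length ≤ rest.sum := by
      refine length_le_sum rest fun y hy => hpos y ?_
      simp [hy]
    omega

lemma Dc_reverse (a : List ℕ) :
    Dc a.reverse = ∏ i ∈ Finset.range a.length,
      (((a.take (i + 1)).sum : ℝ) - ((i : ℝ) + 1)) := by
  induction a using List.reverseRecOn with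
  | nil =>
    simp only [List.reverse_nil, List.length_nil, Finset.range_zero, Finset.prod_empty]
    rfl
  | append_singleton as b ih =>
    have h1 : (as ++ [b]).reverse = b :: as.reverse := by simp
    rw [h1, show Dc (b :: as.reverse)
      = (((b :: as.reverse).sum : ℝ) - ((b :: as.reverse).length : ℝ)) * Dc as.reverse from rfl,
      ih]
    have h2 : (as ++ [b]).length = as.length + 1 := by simp
    rw [h2, Finset.prod_range_succ]
    have h3 : ∀ i ∈ Finset.range as.length,
        (((as ++ [b]).take (i + 1)).sum : ℝ) - ((i : ℝ) + 1)
          = ((as.take (i + 1)).sum : ℝ) - ((i : ℝ) + 1) := by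
      intro i hi
      rw [List.take_append_of_le_length (by simp at hi; omega)]
    rw [Finset.prod_congr rfl h3]
    have h4 : ((as ++ [b]).take (as.length + 1)) = as ++ [b] := by
      refine List.take_of_length_le (by simp)
    rw [h4]
    have h5 : ((b :: as.reverse).sum : ℝ) - ((b :: as.reverse).length : ℝ)
        = (((as ++ [b]).sum : ℝ) - ((as.length : ℝ) + 1)) := by
      simp [List.sum_cons, List.sum_append, List.sum_reverse]
      push_cast
      ring
    rw [h5]
    ring

theorem stmt_15 (a : List ℕ) (ha : a ≠ []) (hhead : 2 ≤ a.head ha)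
    (hpos : ∀ x ∈ a, 1 ≤ x) :
    (fun n : ℕ => dtail a 0 n) ~[atTop]
      fun n : ℕ =>
        (n : ℝ) ^ ((a.length : ℤ) - (a.sum : ℤ)) /
          ∏ i : Fin a.length, (((a.take ((i : ℕ) + 1)).sum : ℝ) - ((i : ℕ) + 1)) := by
  have hadm := adm_reverse a ha hhead hpos
  obtain ⟨hfin, hbd, hD, heq⟩ := main a.reverse hadm
  have hL : (fun n : ℕ => dtail a 0 n) = fun n => (W a.reverse n).toReal :=
    funext (dtail_eq_W a ha)
  rw [hL]
  refine heq.trans (Filter.EventuallyEq.isEquivalent (Eventually.of_forall fun n => ?_))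
  have hrs : a.reverse.sum = a.sum := a.sum_reverse
  have hrl : a.reverse.length = a.length := a.length_reverse
  have hge : a.length + 1 ≤ a.sum := by
    have := hadm a.reverse (List.suffix_refl _) (by simpa [List.reverse_eq_nil_iff] using ha)
    omega
  have hz : ((a.length : ℤ) - (a.sum : ℤ)) = -((a.sum - a.length : ℕ) : ℤ) := by omega
  have hzp : (n : ℝ) ^ ((a.length : ℤ) - (a.sum : ℤ))
      = ((n : ℝ) ^ (a.sum - a.length))⁻¹ := by
    rw [hz, zpow_neg, zpow_natCast]
  have hprod : (∏ i : Fin a.length, (((a.take ((i : ℕ) + 1)).sum : ℝ) - ((i : ℕ) + 1)))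
      = Dc a.reverse := by
    rw [Dc_reverse]
    exact Fin.prod_univ_eq_prod_range
      (fun i : ℕ => ((a.take (i + 1)).sum : ℝ) - ((i : ℝ) + 1)) a.length
  show ((n : ℝ) ^ (a.reverse.sum - a.reverse.length))⁻¹ / Dc a.reverse
      = (n : ℝ) ^ ((a.length : ℤ) - (a.sum : ℤ)) /
          ∏ i : Fin a.length, (((a.take ((i : ℕ) + 1)).sum : ℝ) - (((i : ℕ) : ℝ) + 1))
  rw [hrs, hrl, hzp, hprod]
end

section
/- For integers 0 ≤ p < q and any non-empty composition a = (a₁,…,a_r), the quantity φ_{p,q}(a) = q^{-a₁} ∑_{q>n₂>⋯>n_r>p} n₂^{-a₂}⋯n_r^{-a_r} satisfies 0 ≤ φ_{p,q}(a) ≤ 1, and for any composition a (possibly empty), ζ_{]p,q]}(a) = ∑_{q≥n₁>⋯>n_r>p} n₁^{-a₁}⋯n_r^{-a_r} satisfies 0 ≤ ζ_{]p,q]}(a) ≤ q - p. -/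
/-- `φ_{p,q}(a) = q^{-a₁} ∑_{q>n₂>⋯>n_r>p} n₂^{-a₂}⋯n_r^{-a_r}` for a non-empty
composition `a` (equal to `q^{-a₁}` when `r = 1`). -/
noncomputable def phiPQ (a : List ℕ) (p q : ℕ) : ℝ :=
  (q : ℝ) ^ (-(a.head! : ℤ)) *
    ∑' s : {s : Fin a.tail.length → ℕ // StrictAnti s ∧ ∀ i, p < s i ∧ s i < q},
      ∏ i : Fin a.tail.length, (s.1 i : ℝ) ^ (-(a.tail.get i : ℤ))

/-- `ζ_{]p,q]}(a) = ∑_{q ≥ n₁>⋯>n_r>p} n₁^{-a₁}⋯n_r^{-a_r}` (equal to `1` when `r = 0`). -/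
noncomputable def zetaPQ (a : List ℕ) (p q : ℕ) : ℝ :=
  ∑' s : {s : Fin a.length → ℕ // StrictAnti s ∧ ∀ i, p < s i ∧ s i ≤ q},
    ∏ i : Fin a.length, (s.1 i : ℝ) ^ (-(a.get i : ℤ))

lemma strictAnti_eq_of_image_eq {r : ℕ} {f g : Fin r → ℕ} (hf : StrictAnti f)
    (hg : StrictAnti g) (h : Finset.univ.image f = Finset.univ.image g) : f = g := by
  have hf' : StrictMono (f ∘ Fin.rev) := fun i j hij => hf (Fin.rev_lt_rev.mpr hij)
  have hg' : StrictMono (g ∘ Fin.rev) := fun i j hij => hg (Fin.rev_lt_rev.mpr hij)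
  have hcard : (Finset.univ.image f).card = r := by
    rw [Finset.card_image_of_injective _ hf.injective, Finset.card_univ, Fintype.card_fin]
  have h1 : f ∘ Fin.rev = (Finset.univ.image f).orderEmbOfFin hcard :=
    Finset.orderEmbOfFin_unique hcard
      (fun x => Finset.mem_image.mpr ⟨x.rev, Finset.mem_univ _, rfl⟩) hf'
  have h2 : g ∘ Fin.rev = (Finset.univ.image f).orderEmbOfFin hcard :=
    Finset.orderEmbOfFin_unique hcard
      (fun x => h ▸ Finset.mem_image.mpr ⟨x.rev, Finset.mem_univ _, rfl⟩) hg'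
  funext i
  have := congrFun (h1.trans h2.symm) i.rev
  simpa [Fin.rev_rev] using this

lemma telescope_prod (p : ℕ) : ∀ m, p ≤ m →
    ∏ n ∈ Finset.Ioc p m, ((n : ℝ)⁻¹ + 1) = ((m : ℝ) + 1) / ((p : ℝ) + 1) := by
  intro m hm
  induction m, hm using Nat.le_induction with
  | base => rw [Finset.Ioc_self, Finset.prod_empty, div_self (by positivity)]
  | succ m hm ih =>
      rw [Finset.prod_Ioc_succ_top hm, ih]
      have h1 : ((m : ℝ) + 1) ≠ 0 := by positivity
      have h2 : ((p : ℝ) + 1) ≠ 0 := by positivity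
      push_cast
      field_simp
      ring

lemma aux_sum (r p m : ℕ) (hpm : p ≤ m) (b : Fin r → ℕ) (hb : ∀ i, 1 ≤ b i) :
    0 ≤ (∑' s : {s : Fin r → ℕ // StrictAnti s ∧ ∀ i, p < s i ∧ s i ≤ m},
        ∏ i : Fin r, (s.1 i : ℝ) ^ (-(b i : ℤ))) ∧
      (∑' s : {s : Fin r → ℕ // StrictAnti s ∧ ∀ i, p < s i ∧ s i ≤ m},
        ∏ i : Fin r, (s.1 i : ℝ) ^ (-(b i : ℤ))) ≤
        (if r = 0 then 1 else ((m : ℝ) + 1) / ((p : ℝ) + 1) - 1) := by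
  classical
  set T := {s : Fin r → ℕ // StrictAnti s ∧ ∀ i, p < s i ∧ s i ≤ m} with hT
  haveI : Finite T := by
    apply Finite.of_injective (fun s : T => fun i : Fin r => (⟨s.1 i, Nat.lt_succ_of_le (s.2.2 i).2⟩ : Fin (m + 1)))
    intro s t hst
    ext i
    exact congrArg Fin.val (congrFun hst i)
  constructor
  · exact tsum_nonneg fun s => Finset.prod_nonneg fun i _ => zpow_nonneg (Nat.cast_nonneg _) _
  rcases Nat.eq_zero_or_pos r with hr | hr
  · subst hr
    simp only [if_pos rfl]
    have hu : ∀ s t : T, s = t := by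
      intro s t
      apply Subtype.ext
      funext i
      exact i.elim0
    have hdef : T := ⟨fun i => i.elim0, fun i => i.elim0, fun i => i.elim0⟩
    rw [tsum_eq_single hdef (fun b' hb' => absurd (hu b' hdef) hb')]
    simp
  · rw [if_neg (Nat.pos_iff_ne_zero.mp hr)]
    haveI : Nonempty (Fin r) := ⟨⟨0, hr⟩⟩
    haveI : Fintype T := Fintype.ofFinite T
    rw [tsum_fintype]
    have hone : ∀ s : T, ∀ i, (1 : ℝ) ≤ (s.1 i : ℝ) := by
      intro s i
      have := (s.2.2 i).1
      exact_mod_cast Nat.one_le_iff_ne_zero.mpr (by omega)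
    calc ∑ s : T, ∏ i : Fin r, (s.1 i : ℝ) ^ (-(b i : ℤ))
        ≤ ∑ s : T, ∏ i : Fin r, ((s.1 i : ℝ))⁻¹ := by
          apply Finset.sum_le_sum
          intro s _
          apply Finset.prod_le_prod (fun i _ => zpow_nonneg (Nat.cast_nonneg _) _)
          intro i _
          have h1 : (s.1 i : ℝ) ^ (-(b i : ℤ)) ≤ (s.1 i : ℝ) ^ (-1 : ℤ) :=
            zpow_le_zpow_right₀ (hone s i) (by have := hb i; omega)
          simpa using h1
      _ = ∑ s : T, ∏ n ∈ Finset.univ.image s.1, (n : ℝ)⁻¹ := by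
          apply Finset.sum_congr rfl
          intro s _
          rw [Finset.prod_image (fun x _ y _ h => s.2.1.injective h)]
      _ = ∑ S ∈ Finset.univ.image (fun s : T => Finset.univ.image s.1),
            ∏ n ∈ S, (n : ℝ)⁻¹ := by
          rw [Finset.sum_image]
          intro s _ t _ hst
          exact Subtype.ext (strictAnti_eq_of_image_eq s.2.1 t.2.1 hst)
      _ ≤ ∑ S ∈ ((Finset.Ioc p m).powerset.erase ∅), ∏ n ∈ S, (n : ℝ)⁻¹ := by
          apply Finset.sum_le_sum_of_subset_of_nonneg
          · intro S hS
            obtain ⟨s, _, rfl⟩ := Finset.mem_image.mp hS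
            rw [Finset.mem_erase]
            constructor
            · apply Finset.nonempty_iff_ne_empty.mp
              exact (Finset.univ_nonempty (α := Fin r)).image _
            · rw [Finset.mem_powerset]
              intro n hn
              obtain ⟨i, _, rfl⟩ := Finset.mem_image.mp hn
              exact Finset.mem_Ioc.mpr (s.2.2 i)
          · intro S _ _
            exact Finset.prod_nonneg fun n _ => by positivity
      _ = (∑ S ∈ (Finset.Ioc p m).powerset, ∏ n ∈ S, (n : ℝ)⁻¹) - 1 := by
          rw [Finset.sum_erase_eq_sub (Finset.empty_mem_powerset _)]
          simp
      _ = (∏ n ∈ Finset.Ioc p m, ((n : ℝ)⁻¹ + 1)) - 1 := by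
          rw [Finset.prod_add]
          simp
      _ = ((m : ℝ) + 1) / ((p : ℝ) + 1) - 1 := by rw [telescope_prod p m hpm]

theorem stmt_16 (p q : ℕ) (hpq : p < q) (a : List ℕ) (hpos : ∀ x ∈ a, 1 ≤ x) :
    (a ≠ [] → 0 ≤ phiPQ a p q ∧ phiPQ a p q ≤ 1) ∧
      (0 ≤ zetaPQ a p q ∧ zetaPQ a p q ≤ (q : ℝ) - (p : ℝ)) := by
  have hq1 : 1 ≤ q := Nat.lt_of_le_of_lt (Nat.zero_le p) hpq
  constructor
  · intro ha
    unfold phiPQ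
    have hiff : ∀ s : Fin a.tail.length → ℕ,
        (StrictAnti s ∧ ∀ i, p < s i ∧ s i < q) ↔
          (StrictAnti s ∧ ∀ i, p < s i ∧ s i ≤ q - 1) := fun s => by
      constructor <;> intro h <;>
        exact ⟨h.1, fun i => ⟨(h.2 i).1, by have := (h.2 i).2; omega⟩⟩
    rw [show (∑' s : {s : Fin a.tail.length → ℕ // StrictAnti s ∧ ∀ i, p < s i ∧ s i < q},
          ∏ i : Fin a.tail.length, (s.1 i : ℝ) ^ (-(a.tail.get i : ℤ))) =
        ∑' s : {s : Fin a.tail.length → ℕ // StrictAnti s ∧ ∀ i, p < s i ∧ s i ≤ q - 1},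
          ∏ i : Fin a.tail.length, (s.1 i : ℝ) ^ (-(a.tail.get i : ℤ)) from
      ((Equiv.subtypeEquivRight hiff).symm.tsum_eq _).symm.trans
        (tsum_congr fun c => by simp [Equiv.subtypeEquivRight]; rfl)]
    obtain ⟨h0, h1⟩ := aux_sum a.tail.length p (q - 1) (by omega)
      (fun i => a.tail.get i)
      (fun i => hpos _ (List.mem_of_mem_tail (a.tail.get_mem i)))
    have hhead : 1 ≤ a.head! := hpos _ (List.head!_mem_self ha)
    have hq' : (1 : ℝ) ≤ (q : ℝ) := by exact_mod_cast hq1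
    have hqpow_nonneg : (0 : ℝ) ≤ (q : ℝ) ^ (-(a.head! : ℤ)) :=
      zpow_nonneg (Nat.cast_nonneg _) _
    have hqpow : (q : ℝ) ^ (-(a.head! : ℤ)) ≤ (q : ℝ)⁻¹ := by
      have := zpow_le_zpow_right₀ hq' (show -(a.head! : ℤ) ≤ -1 by omega)
      simpa using this
    refine ⟨mul_nonneg hqpow_nonneg h0, ?_⟩
    by_cases htl : a.tail.length = 0
    · rw [if_pos htl] at h1
      have hqpow1 : (q : ℝ) ^ (-(a.head! : ℤ)) ≤ 1 := by
        have hinv : (q : ℝ)⁻¹ ≤ 1 := inv_le_one_of_one_le₀ hq'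
        linarith
      calc (q : ℝ) ^ (-(a.head! : ℤ)) * _ ≤ (q : ℝ) ^ (-(a.head! : ℤ)) * 1 :=
            mul_le_mul_of_nonneg_left h1 hqpow_nonneg
        _ ≤ 1 := by linarith
    · rw [if_neg htl] at h1
      have hcast : (((q - 1 : ℕ) : ℝ) + 1) = (q : ℝ) := by
        have : ((q - 1 : ℕ) : ℝ) = (q : ℝ) - 1 := by
          push_cast [Nat.cast_sub hq1]
          ring
        linarith
      rw [hcast] at h1
      have hp1 : (1 : ℝ) ≤ (p : ℝ) + 1 := by
        have : (0:ℝ) ≤ (p:ℝ) := Nat.cast_nonneg p; linarith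
      have hdiv : (q : ℝ) / ((p : ℝ) + 1) ≤ (q : ℝ) :=
        div_le_self (by positivity) hp1
      have hZ : (∑' s : {s : Fin a.tail.length → ℕ // StrictAnti s ∧
          ∀ i, p < s i ∧ s i ≤ q - 1},
          ∏ i : Fin a.tail.length, (s.1 i : ℝ) ^ (-(a.tail.get i : ℤ))) ≤ (q : ℝ) - 1 := by
        linarith
      have hqinv : (0 : ℝ) < (q : ℝ)⁻¹ := by positivity
      calc (q : ℝ) ^ (-(a.head! : ℤ)) * _ ≤ (q : ℝ)⁻¹ * ((q : ℝ) - 1) := by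
            apply mul_le_mul hqpow hZ h0 (le_of_lt hqinv)
        _ = 1 - (q : ℝ)⁻¹ := by field_simp
        _ ≤ 1 := by linarith
  · unfold zetaPQ
    obtain ⟨h0, h1⟩ := aux_sum a.length p q (le_of_lt hpq)
      (fun i => a.get i) (fun i => hpos _ (a.get_mem i))
    refine ⟨h0, h1.trans ?_⟩
    have hpq' : (p : ℝ) + 1 ≤ (q : ℝ) := by exact_mod_cast hpq
    split_ifs with h
    · linarith
    · have heq : ((q : ℝ) + 1) / ((p : ℝ) + 1) - 1 = ((q : ℝ) - (p : ℝ)) / ((p : ℝ) + 1) := by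
        have : ((p : ℝ) + 1) ≠ 0 := by positivity
        field_simp
        ring
      rw [heq]
      exact div_le_self (by linarith) (by linarith)
end
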